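/- arXiv:1103.6138 — 7 statements merged into one kernel-verified Lean document; each statement's English description precedes it below -/
import Mathlib

section
/- Let G be a finite group and p a prime such that gcd(p-1, |G|) = 1. Suppose |G'| = p^2, |G' ∩ Z(G)| = p, and the centralizer C_G(G') is non-abelian, and let s be the positive integer with p^{2s} = |C_G(G') : Z(C_G(G'))|. Then Pr(G) = (1/p^4)·((p-1)/p^{2s-1} + p^2 + p - 1). -/
open Subgroup
open scoped commutatorElement

section CommProbAux

set_option linter.unusedSectionVars false

variable {G : Type*} [Group G] [Finite G]

private lemma comm_expandL (a b c : G) : ⁅a * b, c⁆ = a * ⁅b, c⁆ * a⁻¹ * ⁅a, c⁆ := by group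

private lemma comm_expandR (a b c : G) : ⁅c, a * b⁆ = ⁅c, a⁆ * (a * ⁅c, b⁆ * a⁻¹) := by group

private lemma comm_conj (g c1 c2 : G) : g * ⁅c1, c2⁆ * g⁻¹ = ⁅g * c1 * g⁻¹, g * c2 * g⁻¹⁆ := by
  group

lemma commutator_elts_commute {p : ℕ} (hp : p.Prime)
    (hG' : Nat.card ↥(commutator G) = p ^ 2)
    {a b : G} (ha : a ∈ commutator G) (hb : b ∈ commutator G) : a * b = b * a := by
  haveI : Fact p.Prime := ⟨hp⟩
  have h := IsPGroup.commutative_of_card_eq_prime_sq (G := ↥(commutator G)) hG'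
    ⟨a, ha⟩ ⟨b, hb⟩
  exact congrArg Subtype.val h

/-- conjugate of a central-mod element: central elements are fixed by conjugation -/
private lemma conj_central {k : G} (hk : k ∈ Subgroup.center G) (x : G) :
    x * k * x⁻¹ = k := by
  have := (Subgroup.mem_center_iff.mp hk x).symm
  rw [← this, mul_inv_cancel_right]

/-- L4 : commutators of elements of `C = C_G(G')` lie in `K = G' ⊓ Z(G)`. -/
lemma commutator_centralizer_mem_K {p : ℕ} (hp : p.Prime)
    (hG' : Nat.card ↥(commutator G) = p ^ 2)
    {c1 c2 : G} (h1 : c1 ∈ centralizer (commutator G : Set G))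
    (h2 : c2 ∈ centralizer (commutator G : Set G)) :
    ⁅c1, c2⁆ ∈ commutator G ⊓ Subgroup.center G := by
  refine ⟨commutator_mem_commutator (mem_top _) (mem_top _), Subgroup.mem_center_iff.mpr ?_⟩
  intro g
  -- show g * ⁅c1,c2⁆ = ⁅c1,c2⁆ * g, i.e. g ⁅c1,c2⁆ g⁻¹ = ⁅c1,c2⁆
  have key : g * ⁅c1, c2⁆ * g⁻¹ = ⁅c1, c2⁆ := by
    set v1 := ⁅g, c1⁆ with hv1def
    set v2 := ⁅g, c2⁆ with hv2def
    have hv1 : v1 ∈ commutator G := commutator_mem_commutator (mem_top _) (mem_top _)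
    have hv2 : v2 ∈ commutator G := commutator_mem_commutator (mem_top _) (mem_top _)
    have hw : ⁅c1, c2⁆ ∈ commutator G := commutator_mem_commutator (mem_top _) (mem_top _)
    have e1 : g * c1 * g⁻¹ = v1 * c1 := by rw [hv1def]; group
    have e2 : g * c2 * g⁻¹ = v2 * c2 := by rw [hv2def]; group
    rw [comm_conj, e1, e2]
    -- ⁅v1 * c1, v2 * c2⁆ = ⁅c1, c2⁆
    have hc1v2 : ⁅c1, v2⁆ = 1 :=
      commutatorElement_eq_one_iff_commute.mpr (h1 v2 hv2).symm
    have hv1v2 : ⁅v1, v2⁆ = 1 :=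
      commutatorElement_eq_one_iff_commute.mpr
        (commutator_elts_commute hp hG' hv1 hv2)
    have hv1c2 : ⁅v1, c2⁆ = 1 :=
      commutatorElement_eq_one_iff_commute.mpr (h2 v1 hv1)
    have swap2 : v2 * ⁅c1, c2⁆ * v2⁻¹ = ⁅c1, c2⁆ := by
      have h := commutator_elts_commute hp hG' hv2 hw
      rw [h, mul_inv_cancel_right]
    have swap1 : v1 * ⁅c1, c2⁆ * v1⁻¹ = ⁅c1, c2⁆ := by
      have h := commutator_elts_commute hp hG' hv1 hw
      rw [h, mul_inv_cancel_right]
    have hx : ⁅c1, v2 * c2⁆ = ⁅c1, c2⁆ := by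
      rw [comm_expandR, hc1v2, one_mul, swap2]
    have hy : ⁅v1, v2 * c2⁆ = 1 := by
      rw [comm_expandR, hv1v2, hv1c2, one_mul, mul_one, mul_inv_cancel]
    rw [comm_expandL, hx, hy, mul_one, swap1]
  exact mul_inv_eq_iff_eq_mul.mp key


private lemma conj_pow_nat (g x : G) (n : ℕ) : (g * x * g⁻¹) ^ n = g * x ^ n * g⁻¹ := by
  induction n with
  | zero => simp
  | succ n ih => rw [pow_succ, pow_succ, ih]; group

private lemma conj_zpow_int (g x : G) (n : ℤ) : (g * x * g⁻¹) ^ n = g * x ^ n * g⁻¹ := by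
  have h1 := map_zpow (MulAut.conj g) x n
  simpa [MulAut.conj_apply] using h1

/-- existence of a generator of `G'` modulo `K`. -/
lemma exists_gen_mod_K {p : ℕ} (hp : p.Prime)
    (hG' : Nat.card ↥(commutator G) = p ^ 2)
    (hGZ : Nat.card ↥(commutator G ⊓ Subgroup.center G) = p) :
    ∃ w ∈ commutator G, w ∉ commutator G ⊓ Subgroup.center G ∧
      (∀ j : ℕ, w ^ j ∈ commutator G ⊓ Subgroup.center G → p ∣ j) ∧
      w ^ p ∈ commutator G ⊓ Subgroup.center G ∧
      ∀ a ∈ commutator G, ∃ (i : ℤ) (k : G), k ∈ commutator G ⊓ Subgroup.center G ∧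
        a = w ^ i * k := by
  classical
  set K : Subgroup G := commutator G ⊓ Subgroup.center G with hK
  set K2 : Subgroup ↥(commutator G) := K.subgroupOf (commutator G) with hK2
  haveI hnorm : K2.Normal := by
    constructor
    intro n hn g
    have hnc : (n : G) ∈ Subgroup.center G := (Subgroup.mem_subgroupOf.mp hn).2
    rw [Subgroup.mem_subgroupOf]
    push_cast
    rw [conj_central hnc]
    exact Subgroup.mem_subgroupOf.mp hn
  have cardK2 : Nat.card K2 = p := by
    rw [Nat.card_congr (Subgroup.subgroupOfEquivOfLe inf_le_left).toEquiv, hGZ]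
  have cardQ : Nat.card (↥(commutator G) ⧸ K2) = p := by
    have h := Subgroup.card_eq_card_quotient_mul_card_subgroup (s := K2)
    rw [hG', cardK2] at h
    have h2 : Nat.card (↥(commutator G) ⧸ K2) * p = p * p := by rw [← h]; ring
    exact Nat.eq_of_mul_eq_mul_right hp.pos h2
  have hnle : ¬ commutator G ≤ Subgroup.center G := by
    intro hle
    have hKeq : K = commutator G := inf_eq_left.mpr hle
    rw [hKeq, hG'] at hGZ
    nlinarith [hp.two_le]
  have hex : ∃ w ∈ commutator G, w ∉ K := by
    by_contra hcon
    push_neg at hcon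
    exact hnle fun x hx => (Subgroup.mem_inf.mp (hcon x hx)).2
  obtain ⟨w, hw, hwK⟩ := hex
  set wQ : ↥(commutator G) ⧸ K2 := QuotientGroup.mk' K2 ⟨w, hw⟩ with hwQdef
  have hwQ : wQ ≠ 1 := by
    intro h1
    have hker : (⟨w, hw⟩ : ↥(commutator G)) ∈ K2 := by
      rw [← QuotientGroup.ker_mk' K2]
      exact h1
    exact hwK (Subgroup.mem_subgroupOf.mp hker)
  have horder : orderOf wQ = p := by
    have hdvd := orderOf_dvd_natCard wQ
    rw [cardQ] at hdvd
    rcases hp.eq_one_or_self_of_dvd _ hdvd with h | h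
    · exact absurd (orderOf_eq_one_iff.mp h) hwQ
    · exact h
  have hbase : ∀ j : ℕ, (w ^ j ∈ K ↔ wQ ^ j = 1) := by
    intro j
    have hmemiff : (⟨w, hw⟩ : ↥(commutator G)) ^ j ∈ K2 ↔ w ^ j ∈ K := by
      rw [Subgroup.mem_subgroupOf]
      push_cast
      rfl
    constructor
    · intro hj
      have hker : (⟨w, hw⟩ : ↥(commutator G)) ^ j ∈ K2 := hmemiff.mpr hj
      rw [← QuotientGroup.ker_mk' K2] at hker
      rw [hwQdef, ← map_pow]
      exact hker
    · intro hj
      rw [hwQdef, ← map_pow] at hj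
      have hker : (⟨w, hw⟩ : ↥(commutator G)) ^ j ∈ K2 := by
        rw [← QuotientGroup.ker_mk' K2]; exact hj
      exact hmemiff.mp hker
  refine ⟨w, hw, hwK, ?_, ?_, ?_⟩
  · intro j hj
    have h1 : wQ ^ j = 1 := (hbase j).mp hj
    have h2 := orderOf_dvd_of_pow_eq_one h1
    rwa [horder] at h2
  · refine (hbase p).mpr ?_
    rw [← horder]
    exact pow_orderOf_eq_one wQ
  · intro a ha
    have hgen : Subgroup.zpowers wQ = ⊤ := by
      apply Subgroup.eq_top_of_card_eq
      rw [Nat.card_zpowers, horder, cardQ]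
    have hmem : QuotientGroup.mk' K2 ⟨a, ha⟩ ∈ Subgroup.zpowers wQ := by
      rw [hgen]; exact Subgroup.mem_top _
    obtain ⟨i, hi⟩ := Subgroup.mem_zpowers_iff.mp hmem
    rw [hwQdef, ← map_zpow] at hi
    obtain ⟨z, hz, hzeq⟩ := (QuotientGroup.mk'_eq_mk' K2).mp hi
    refine ⟨i, (z : G), Subgroup.mem_subgroupOf.mp hz, ?_⟩
    have := congrArg (Subtype.val : ↥(commutator G) → G) hzeq
    push_cast at this
    exact this.symm

/-- L2 : every commutator `⁅g, a⁆` with `a ∈ G'` lies in `K = G' ⊓ Z(G)`. -/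
lemma conj_commutator_mem_K {p : ℕ} (hp : p.Prime)
    (hgcd : Nat.gcd (p - 1) (Nat.card G) = 1)
    (hG' : Nat.card ↥(commutator G) = p ^ 2)
    (hGZ : Nat.card ↥(commutator G ⊓ Subgroup.center G) = p) :
    ∀ (g a : G), a ∈ commutator G → ⁅g, a⁆ ∈ commutator G ⊓ Subgroup.center G := by
  classical
  haveI : Fact p.Prime := ⟨hp⟩
  set K : Subgroup G := commutator G ⊓ Subgroup.center G with hKdef
  obtain ⟨w, hw, hwK, hdvdK, hwp, hdec⟩ := exists_gen_mod_K hp hG' hGZ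
  set n : ℕ := Nat.card G with hndef
  have hn0 : n ≠ 0 := Nat.card_pos.ne'
  have hKcent : ∀ k ∈ K, k ∈ Subgroup.center G := fun k hk => (Subgroup.mem_inf.mp hk).2
  intro g a ha
  -- first, the conjugate of w
  have hcw : g * w * g⁻¹ ∈ commutator G :=
    Subgroup.Normal.conj_mem inferInstance w hw g
  obtain ⟨i, k0, hk0, hconj⟩ := hdec _ hcw
  set m : ℕ := (i % (p : ℤ)).toNat with hmdef
  have hp0 : (0 : ℤ) < (p : ℤ) := by exact_mod_cast hp.pos
  have hmi : (m : ℤ) = i % (p : ℤ) := Int.toNat_of_nonneg (Int.emod_nonneg i hp0.ne')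
  have hmlt : m < p := by
    have := Int.emod_lt_of_pos i hp0
    omega
  have hsplit : ∃ k1 ∈ K, g * w * g⁻¹ = w ^ m * k1 := by
    have hd : (p : ℤ) ∣ (i - (m : ℤ)) := ⟨i / (p : ℤ), by rw [hmi, Int.emod_def]; ring⟩
    obtain ⟨t, ht⟩ := hd
    have hwim : w ^ (i - (m : ℤ)) ∈ K := by
      rw [ht, zpow_mul, zpow_natCast]
      exact Subgroup.zpow_mem K hwp t
    refine ⟨w ^ (i - (m : ℤ)) * k0, Subgroup.mul_mem K hwim hk0, ?_⟩
    rw [hconj]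
    conv_lhs => rw [show i = (m : ℤ) + (i - (m : ℤ)) by ring]
    rw [zpow_add, zpow_natCast, mul_assoc]
  obtain ⟨k1, hk1, hcw2⟩ := hsplit
  have hk1c : k1 ∈ Subgroup.center G := hKcent k1 hk1
  -- iteration
  have hiter : ∀ j : ℕ, ∃ k ∈ K, g ^ j * w * (g ^ j)⁻¹ = w ^ (m ^ j) * k := by
    intro j
    induction j with
    | zero => exact ⟨1, Subgroup.one_mem K, by simp⟩
    | succ j ih =>
      obtain ⟨k, hk, hkeq⟩ := ih
      refine ⟨k1 ^ (m ^ j) * k, Subgroup.mul_mem K (Subgroup.pow_mem K hk1 _) hk, ?_⟩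
      have h1 : g ^ (j + 1) * w * (g ^ (j + 1))⁻¹ = g * (g ^ j * w * (g ^ j)⁻¹) * g⁻¹ := by
        rw [pow_succ']
        group
      rw [h1, hkeq]
      have h2 : g * (w ^ m ^ j * k) * g⁻¹ = (g * (w ^ m ^ j) * g⁻¹) * (g * k * g⁻¹) := by
        group
      rw [h2, ← conj_pow_nat, hcw2, conj_central (hKcent k hk)]
      have hcomm : Commute (w ^ m) k1 :=
        (Subgroup.mem_center_iff.mp hk1c) (w ^ m)
      rw [hcomm.mul_pow, ← pow_mul, ← pow_succ']
      rw [mul_assoc]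
  -- specialize at j = n
  obtain ⟨k, hk, hkeq⟩ := hiter n
  rw [hndef] at hkeq
  rw [pow_card_eq_one'] at hkeq
  simp only [one_mul, inv_one, mul_one] at hkeq
  -- hkeq : w = w ^ (m ^ n) * k   (with n := Nat.card G)
  have hm1 : m = 1 := by
    rcases Nat.eq_zero_or_pos m with hm0 | hmpos
    · exfalso
      rw [hm0, zero_pow hn0, pow_zero, one_mul] at hkeq
      exact hwK (hkeq ▸ hk)
    · have hmn1 : 1 ≤ m ^ n := Nat.one_le_pow _ _ hmpos
      have hstep : w ^ (m ^ n - 1) ∈ K := by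
        have hps : w ^ (m ^ n) = w * w ^ (m ^ n - 1) := by
          rw [← pow_succ']
          congr 1
          omega
        rw [hps, mul_assoc] at hkeq
        -- hkeq : w = w * (w ^ (m^n - 1) * k)
        have h1 : w ^ (m ^ n - 1) * k = 1 := (left_eq_mul.mp hkeq)
        have h2 : w ^ (m ^ n - 1) = k⁻¹ := mul_eq_one_iff_eq_inv.mp h1
        rw [h2]
        exact Subgroup.inv_mem K hk
      have hdvd := hdvdK _ hstep
      -- p ∣ m ^ n - 1
      have hzmod : ((m : ZMod p)) ^ n = 1 := by
        have hcast : ((m ^ n - 1 : ℕ) : ZMod p) = 0 :=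
          (ZMod.natCast_eq_zero_iff _ _).mpr hdvd
        have he : m ^ n = (m ^ n - 1) + 1 := by omega
        calc ((m : ZMod p)) ^ n = ((m ^ n : ℕ) : ZMod p) := by push_cast; ring
          _ = (((m ^ n - 1) + 1 : ℕ) : ZMod p) := by rw [← he]
          _ = 1 := by rw [Nat.cast_add, hcast, Nat.cast_one, zero_add]
      have hu : IsUnit ((m : ZMod p)) := IsUnit.of_pow_eq_one hzmod hn0
      have hupow : hu.unit ^ n = 1 := by
        ext
        push_cast [IsUnit.unit_spec]
        exact hzmod
      have h1 : orderOf hu.unit ∣ n := orderOf_dvd_of_pow_eq_one hupow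
      have h2 : orderOf hu.unit ∣ p - 1 := by
        have h := orderOf_dvd_card (x := hu.unit)
        rwa [ZMod.card_units_eq_totient, Nat.totient_prime hp] at h
      have hone : orderOf hu.unit = 1 := by
        have := Nat.dvd_gcd h2 h1
        rw [hndef] at this
        rw [hgcd] at this
        exact Nat.dvd_one.mp this
      have hu1 : ((m : ZMod p)) = 1 := by
        have := orderOf_eq_one_iff.mp hone
        have h3 := congrArg (Units.val) this
        rwa [IsUnit.unit_spec] at h3
      haveI : Fact (1 < p) := ⟨hp.one_lt⟩
      have hv := ZMod.val_cast_of_lt hmlt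
      rw [hu1, ZMod.val_one] at hv
      omega
  rw [hm1, pow_one] at hcw2
  -- now the general element a
  obtain ⟨ia, ka, hka, hadec⟩ := hdec a ha
  have hkac : ka ∈ Subgroup.center G := hKcent ka hka
  have hga : g * a * g⁻¹ = w ^ ia * k1 ^ ia * ka := by
    rw [hadec]
    have h1 : g * (w ^ ia * ka) * g⁻¹ = (g * (w ^ ia) * g⁻¹) * (g * ka * g⁻¹) := by group
    rw [h1, ← conj_zpow_int, hcw2, conj_central hkac]
    have hcomm : Commute w k1 := (Subgroup.mem_center_iff.mp hk1c) w
    rw [hcomm.mul_zpow]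
  have hfin : ⁅g, a⁆ = k1 ^ ia := by
    rw [commutatorElement_def]
    calc g * a * g⁻¹ * a⁻¹ = (w ^ ia * k1 ^ ia * ka) * (w ^ ia * ka)⁻¹ := by
          rw [hga, hadec]
      _ = w ^ ia * k1 ^ ia * (w ^ ia)⁻¹ := by group
      _ = k1 ^ ia := by
          have := conj_central (Subgroup.zpow_mem (Subgroup.center G) hk1c ia) (w ^ ia)
          exact this
  rw [hfin]
  exact Subgroup.zpow_mem K hk1 ia



private lemma comm_hom_eq_left {x g1 g2 : G} (h1 : ⁅g1, x⁆ ∈ Subgroup.center G)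
    (h2 : ⁅g2, x⁆ ∈ Subgroup.center G) : ⁅g1 * g2, x⁆ = ⁅g1, x⁆ * ⁅g2, x⁆ := by
  rw [comm_expandL, conj_central h2]
  exact Subgroup.mem_center_iff.mp h1 _

private lemma comm_hom_eq_right {x g1 g2 : G} (h2 : ⁅x, g2⁆ ∈ Subgroup.center G) :
    ⁅x, g1 * g2⁆ = ⁅x, g1⁆ * ⁅x, g2⁆ := by
  rw [comm_expandR, conj_central h2]

/-- first isomorphism counting -/
private lemma card_dom_eq_ker_mul_range {H : Type*} [Group H] [Finite H]
    {K' : Type*} [Group K'] (f : H →* K') :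
    Nat.card H = Nat.card f.ker * Nat.card f.range := by
  have h := Subgroup.card_eq_card_quotient_mul_card_subgroup (s := f.ker)
  rw [Nat.card_congr (QuotientGroup.quotientKerEquivRange f).toEquiv] at h
  rw [h, mul_comm]

private lemma comm_not_le_center {p : ℕ} (hp : p.Prime)
    (hG' : Nat.card ↥(commutator G) = p ^ 2)
    (hGZ : Nat.card ↥(commutator G ⊓ Subgroup.center G) = p) :
    ¬ commutator G ≤ Subgroup.center G := by
  intro hle
  have hKeq : commutator G ⊓ Subgroup.center G = commutator G := inf_eq_left.mpr hle
  rw [hKeq, hG'] at hGZ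
  nlinarith [hp.two_le]

private lemma centralizer_commutator_normal :
    (centralizer (commutator G : Set G)).Normal := by
  constructor
  intro n hn g
  rw [Subgroup.mem_centralizer_iff]
  intro h hh
  have hmem : g⁻¹ * h * g ∈ commutator G := by
    have := Subgroup.Normal.conj_mem (inferInstance : (commutator G).Normal) h hh g⁻¹
    simpa using this
  have hcomm := hn _ hmem
  calc h * (g * n * g⁻¹) = g * ((g⁻¹ * h * g) * n) * g⁻¹ := by group
    _ = g * (n * (g⁻¹ * h * g)) * g⁻¹ := by rw [hcomm]
    _ = (g * n * g⁻¹) * h := by group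

/-- L3 : the centralizer of the commutator subgroup has index `p`. -/
lemma centralizer_commutator_index {p : ℕ} (hp : p.Prime)
    (hgcd : Nat.gcd (p - 1) (Nat.card G) = 1)
    (hG' : Nat.card ↥(commutator G) = p ^ 2)
    (hGZ : Nat.card ↥(commutator G ⊓ Subgroup.center G) = p) :
    (centralizer (commutator G : Set G)).index = p := by
  classical
  obtain ⟨w, hw, hwK, hdvdK, hwp, hdec⟩ := exists_gen_mod_K hp hG' hGZ
  have hL2 := conj_commutator_mem_K hp hgcd hG' hGZ
  set K : Subgroup G := commutator G ⊓ Subgroup.center G with hKdef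
  have hKcent : ∀ k ∈ K, k ∈ Subgroup.center G := fun k hk => (Subgroup.mem_inf.mp hk).2
  -- the homomorphism g ↦ ⁅g, w⁆
  set Θ : G →* ↥K :=
    { toFun := fun g => ⟨⁅g, w⁆, hL2 g w hw⟩
      map_one' := Subtype.ext (by simp [commutatorElement_def])
      map_mul' := fun g1 g2 => Subtype.ext
        (comm_hom_eq_left (hKcent _ (hL2 g1 w hw)) (hKcent _ (hL2 g2 w hw))) } with hΘdef
  have hker : Θ.ker = centralizer (commutator G : Set G) := by
    ext g
    rw [MonoidHom.mem_ker, hΘdef]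
    constructor
    · intro h1
      have h2 : ⁅g, w⁆ = 1 := by
        have := congrArg (Subtype.val : ↥K → G) h1
        simpa using this
      have hcomm : Commute g w := commutatorElement_eq_one_iff_commute.mp h2
      rw [Subgroup.mem_centralizer_iff]
      intro a ha
      obtain ⟨i, k, hk, rfl⟩ := hdec a ha
      have c1 : Commute g (w ^ i) := hcomm.zpow_right i
      have c2 : Commute g k := Subgroup.mem_center_iff.mp (hKcent k hk) g
      exact ((c1.mul_right c2).eq).symm
    · intro hg
      apply Subtype.ext
      show ⁅g, w⁆ = 1
      exact commutatorElement_eq_one_iff_commute.mpr ((hg w hw).symm)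
  have hrange_dvd : Nat.card Θ.range ∣ p := by
    have := Subgroup.card_subgroup_dvd_card (Θ.range)
    rwa [hGZ] at this
  have hC_ne_top : centralizer (commutator G : Set G) ≠ ⊤ := by
    intro htop
    apply comm_not_le_center hp hG' hGZ
    intro a ha
    rw [Subgroup.mem_center_iff]
    intro g
    have hg : g ∈ centralizer (commutator G : Set G) := htop ▸ Subgroup.mem_top g
    exact (hg a ha).symm
  have hidx := Subgroup.index_ker Θ
  rw [hker] at hidx
  rcases hp.eq_one_or_self_of_dvd _ hrange_dvd with h1 | h1
  · exfalso
    rw [h1] at hidx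
    exact hC_ne_top (Subgroup.index_eq_one.mp hidx)
  · rw [hidx, h1]



private lemma mem_centralizer_of_commutator_le {x : G}
    (h : commutator G ≤ centralizer {x}) : x ∈ centralizer (commutator G : Set G) := by
  rw [Subgroup.mem_centralizer_iff]
  intro a ha
  exact Subgroup.mem_centralizer_singleton_iff.mp (h ha)

private lemma commutator_le_ker_K_hom {K' : Subgroup G} (hK'c : K' ≤ Subgroup.center G)
    (f : G →* ↥K') : commutator G ≤ f.ker := by
  rw [commutator_def]
  apply Subgroup.commutator_le.mpr
  intro g1 _ g2 _
  rw [MonoidHom.mem_ker, map_commutatorElement]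
  apply commutatorElement_eq_one_iff_commute.mpr
  have h1 : ((f g1 : G)) ∈ Subgroup.center G := hK'c (f g1).2
  apply Subtype.ext
  push_cast
  exact (Subgroup.mem_center_iff.mp h1 _).symm

/-- counting lemma for a non-`C`-central element of `C`. -/
lemma card_C_eq_of_noncentral {p : ℕ} (hp : p.Prime)
    (hG' : Nat.card ↥(commutator G) = p ^ 2)
    (hGZ : Nat.card ↥(commutator G ⊓ Subgroup.center G) = p)
    {x : G} (hx : x ∈ centralizer (commutator G : Set G))
    (hnc : ∃ y ∈ centralizer (commutator G : Set G), ¬ x * y = y * x) :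
    Nat.card ↥(centralizer (commutator G : Set G)) =
      Nat.card ↥(centralizer (commutator G : Set G) ⊓ centralizer {x}) * p := by
  classical
  set C : Subgroup G := centralizer (commutator G : Set G) with hCdef
  set K : Subgroup G := commutator G ⊓ Subgroup.center G with hKdef
  have hKcent : ∀ k ∈ K, k ∈ Subgroup.center G := fun k hk => (Subgroup.mem_inf.mp hk).2
  set η : ↥C →* ↥K :=
    { toFun := fun c => ⟨⁅(c : G), x⁆, commutator_centralizer_mem_K hp hG' c.2 hx⟩
      map_one' := Subtype.ext (by simp [commutatorElement_def])
      map_mul' := fun c1 c2 => Subtype.ext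
        (comm_hom_eq_left
          (hKcent _ (commutator_centralizer_mem_K hp hG' c1.2 hx))
          (hKcent _ (commutator_centralizer_mem_K hp hG' c2.2 hx))) } with hηdef
  have hcard := card_dom_eq_ker_mul_range η
  have hkereq0 : η.ker = (C ⊓ centralizer {x}).subgroupOf C := by
    ext c
    rw [MonoidHom.mem_ker, Subgroup.mem_subgroupOf, Subgroup.mem_inf]
    constructor
    · intro h1
      refine ⟨c.2, ?_⟩
      have h2 : ⁅(c : G), x⁆ = 1 := by
        have := congrArg (Subtype.val : ↥K → G) h1
        simpa [hηdef] using this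
      exact Subgroup.mem_centralizer_singleton_iff.mpr
        (commutatorElement_eq_one_iff_commute.mp h2).eq
    · intro h
      apply Subtype.ext
      show ⁅(c : G), x⁆ = 1
      exact commutatorElement_eq_one_iff_commute.mpr
        (Subgroup.mem_centralizer_singleton_iff.mp h.2)
  have hkereq : Nat.card ↥(η.ker) = Nat.card ↥(C ⊓ centralizer {x}) := by
    rw [hkereq0]
    exact Nat.card_congr (Subgroup.subgroupOfEquivOfLe inf_le_left).toEquiv
  have hrange : Nat.card η.range = p := by
    have hdvd : Nat.card η.range ∣ p := by
      have := Subgroup.card_subgroup_dvd_card η.range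
      rwa [hGZ] at this
    rcases hp.eq_one_or_self_of_dvd _ hdvd with h1 | h1
    · exfalso
      obtain ⟨y, hy, hyx⟩ := hnc
      have hbot : η.range = ⊥ := Subgroup.card_eq_one.mp h1
      have : η ⟨y, hy⟩ = 1 := by
        have : η ⟨y, hy⟩ ∈ η.range := ⟨⟨y, hy⟩, rfl⟩
        rwa [hbot, Subgroup.mem_bot] at this
      have h2 : ⁅y, x⁆ = 1 := by
        have := congrArg (Subtype.val : ↥K → G) this
        simpa [hηdef] using this
      exact hyx ((commutatorElement_eq_one_iff_commute.mp h2).eq.symm)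
    · exact h1
  rw [hcard, hkereq, hrange]

/-- counting lemma for elements outside `C`. -/
lemma card_of_not_mem_centralizer {p : ℕ} (hp : p.Prime)
    (hgcd : Nat.gcd (p - 1) (Nat.card G) = 1)
    (hG' : Nat.card ↥(commutator G) = p ^ 2)
    (hGZ : Nat.card ↥(commutator G ⊓ Subgroup.center G) = p)
    {x : G} (hx : x ∉ centralizer (commutator G : Set G)) :
    Nat.card G = Nat.card ↥(centralizer {x}) * p ^ 2 ∧
    Nat.card ↥(centralizer {x}) =
      Nat.card ↥(centralizer (commutator G : Set G) ⊓ centralizer {x}) * p := by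
  classical
  have hL2 := conj_commutator_mem_K hp hgcd hG' hGZ
  set C : Subgroup G := centralizer (commutator G : Set G) with hCdef
  set K : Subgroup G := commutator G ⊓ Subgroup.center G with hKdef
  have hKcent : ∀ k ∈ K, k ∈ Subgroup.center G := fun k hk => (Subgroup.mem_inf.mp hk).2
  have hmemc : ∀ g : G, ⁅x, g⁆ ∈ commutator G :=
    fun g => commutator_mem_commutator (Subgroup.mem_top _) (Subgroup.mem_top _)
  set K2 : Subgroup ↥(commutator G) := K.subgroupOf (commutator G) with hK2
  haveI hnorm : K2.Normal := by
    constructor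
    intro n hn g
    have hnc : (n : G) ∈ Subgroup.center G := (Subgroup.mem_subgroupOf.mp hn).2
    rw [Subgroup.mem_subgroupOf]
    push_cast
    rw [conj_central hnc]
    exact Subgroup.mem_subgroupOf.mp hn
  have cardK2 : Nat.card K2 = p := by
    rw [Nat.card_congr (Subgroup.subgroupOfEquivOfLe inf_le_left).toEquiv, hGZ]
  have cardQ : Nat.card (↥(commutator G) ⧸ K2) = p := by
    have h := Subgroup.card_eq_card_quotient_mul_card_subgroup (s := K2)
    rw [hG', cardK2] at h
    have h2 : Nat.card (↥(commutator G) ⧸ K2) * p = p * p := by rw [← h]; ring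
    exact Nat.eq_of_mul_eq_mul_right hp.pos h2
  -- the homomorphism ψ : G →* Q
  have hmapmul : ∀ g1 g2 : G,
      QuotientGroup.mk' K2 ⟨⁅x, g1 * g2⁆, hmemc _⟩ =
      QuotientGroup.mk' K2 ⟨⁅x, g1⁆, hmemc _⟩ * QuotientGroup.mk' K2 ⟨⁅x, g2⁆, hmemc _⟩ := by
    intro g1 g2
    have hκK : ⁅g1, ⁅x, g2⁆⁆ ∈ K := hL2 g1 _ (hmemc g2)
    have hκc : ⁅g1, ⁅x, g2⁆⁆ ∈ Subgroup.center G := hKcent _ hκK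
    have hid : ⁅x, g1 * g2⁆ = ⁅x, g1⁆ * ⁅x, g2⁆ * ⁅g1, ⁅x, g2⁆⁆ := by
      rw [comm_expandR]
      have h2 : g1 * ⁅x, g2⁆ * g1⁻¹ = ⁅x, g2⁆ * ⁅g1, ⁅x, g2⁆⁆ := by
        calc g1 * ⁅x, g2⁆ * g1⁻¹ = ⁅g1, ⁅x, g2⁆⁆ * ⁅x, g2⁆ := by
              rw [commutatorElement_def]; group
          _ = ⁅x, g2⁆ * ⁅g1, ⁅x, g2⁆⁆ := (Subgroup.mem_center_iff.mp hκc _).symm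
      rw [h2, ← mul_assoc]
    have hsub : (⟨⁅x, g1 * g2⁆, hmemc _⟩ : ↥(commutator G)) =
        ⟨⁅x, g1⁆, hmemc _⟩ * ⟨⁅x, g2⁆, hmemc _⟩ *
          ⟨⁅g1, ⁅x, g2⁆⁆, (Subgroup.mem_inf.mp hκK).1⟩ := by
      apply Subtype.ext
      push_cast
      exact hid
    rw [hsub, map_mul, map_mul]
    have hone : QuotientGroup.mk' K2 ⟨⁅g1, ⁅x, g2⁆⁆, (Subgroup.mem_inf.mp hκK).1⟩ = 1 := by
      rw [← MonoidHom.mem_ker, QuotientGroup.ker_mk', Subgroup.mem_subgroupOf]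
      exact hκK
    rw [hone, mul_one]
  set ψ : G →* (↥(commutator G) ⧸ K2) :=
    { toFun := fun g => QuotientGroup.mk' K2 ⟨⁅x, g⁆, hmemc _⟩
      map_one' := by
        rw [← MonoidHom.mem_ker, QuotientGroup.ker_mk', Subgroup.mem_subgroupOf]
        show ⁅x, (1 : G)⁆ ∈ K
        simpa [commutatorElement_def] using Subgroup.one_mem K
      map_mul' := hmapmul } with hψdef
  have hkerψ : ∀ g : G, g ∈ ψ.ker ↔ ⁅x, g⁆ ∈ K := by
    intro g
    rw [MonoidHom.mem_ker, hψdef]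
    show QuotientGroup.mk' K2 _ = 1 ↔ _
    rw [← MonoidHom.mem_ker, QuotientGroup.ker_mk', Subgroup.mem_subgroupOf]
  have hQcomm : ∀ q r : ↥(commutator G) ⧸ K2, Commute q r := by
    intro q r
    refine QuotientGroup.induction_on q (fun a => QuotientGroup.induction_on r (fun b => ?_))
    show ((a : ↥(commutator G) ⧸ K2)) * b = b * a
    rw [← QuotientGroup.mk_mul, ← QuotientGroup.mk_mul]
    congr 1
    exact Subtype.ext (commutator_elts_commute hp hG' a.2 b.2)
  have hcommle : commutator G ≤ ψ.ker := by
    show ⁅(⊤ : Subgroup G), ⊤⁆ ≤ ψ.ker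
    apply Subgroup.commutator_le.mpr
    intro g1 _ g2 _
    rw [MonoidHom.mem_ker, map_commutatorElement]
    exact commutatorElement_eq_one_iff_commute.mpr (hQcomm _ _)
  have hcentle : centralizer {x} ≤ ψ.ker := by
    intro g hg
    rw [hkerψ]
    have : ⁅x, g⁆ = 1 := commutatorElement_eq_one_iff_commute.mpr
      (Subgroup.mem_centralizer_singleton_iff.mp hg).symm
    rw [this]
    exact Subgroup.one_mem K
  have hnotle : ¬ ψ.ker ≤ centralizer {x} := by
    intro hle
    exact hx (mem_centralizer_of_commutator_le (hcommle.trans hle))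
  -- the homomorphism ker ψ →* K
  set η : ↥(ψ.ker) →* ↥K :=
    { toFun := fun g => ⟨⁅x, (g : G)⁆, (hkerψ _).mp g.2⟩
      map_one' := Subtype.ext (by simp [commutatorElement_def])
      map_mul' := fun g1 g2 => Subtype.ext
        (comm_hom_eq_right (hKcent _ ((hkerψ _).mp g2.2))) } with hηdef
  have hkerη : η.ker = (centralizer {x}).subgroupOf ψ.ker := by
    ext g
    rw [MonoidHom.mem_ker, Subgroup.mem_subgroupOf, hηdef]
    constructor
    · intro h1
      have h2 : ⁅x, (g : G)⁆ = 1 := by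
        have := congrArg (Subtype.val : ↥K → G) h1
        simpa using this
      exact Subgroup.mem_centralizer_singleton_iff.mpr
        (commutatorElement_eq_one_iff_commute.mp h2).eq.symm
    · intro hg
      apply Subtype.ext
      show ⁅x, (g : G)⁆ = 1
      exact commutatorElement_eq_one_iff_commute.mpr
        (Subgroup.mem_centralizer_singleton_iff.mp hg).symm
  have hrangeη : Nat.card η.range = p := by
    have hdvd : Nat.card η.range ∣ p := by
      have := Subgroup.card_subgroup_dvd_card η.range
      rwa [hGZ] at this
    rcases hp.eq_one_or_self_of_dvd _ hdvd with h1 | h1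
    · exfalso
      apply hnotle
      intro g hg
      have hbot : η.range = ⊥ := Subgroup.card_eq_one.mp h1
      have h2 : η ⟨g, hg⟩ = 1 := by
        have : η ⟨g, hg⟩ ∈ η.range := ⟨⟨g, hg⟩, rfl⟩
        rwa [hbot, Subgroup.mem_bot] at this
      have h3 : ⁅x, g⁆ = 1 := by
        have := congrArg (Subtype.val : ↥K → G) h2
        simpa [hηdef] using this
      exact Subgroup.mem_centralizer_singleton_iff.mpr
        (commutatorElement_eq_one_iff_commute.mp h3).eq.symm
    · exact h1
  have hrangeψ : Nat.card ψ.range = p := by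
    have hdvd : Nat.card ψ.range ∣ p := by
      have := Subgroup.card_subgroup_dvd_card ψ.range
      rwa [cardQ] at this
    rcases hp.eq_one_or_self_of_dvd _ hdvd with h1 | h1
    · exfalso
      have hbot : ψ.ker = ⊤ := by
        rw [eq_top_iff]
        intro g _
        have hψbot : ψ.range = ⊥ := Subgroup.card_eq_one.mp h1
        rw [MonoidHom.mem_ker]
        have : ψ g ∈ ψ.range := ⟨g, rfl⟩
        rwa [hψbot, Subgroup.mem_bot] at this
      -- then ⁅x, g⁆ ∈ K for every g; build G →* K and contradict
      have hK2' : ∀ g : G, ⁅x, g⁆ ∈ K := by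
        intro g
        rw [← hkerψ]
        rw [hbot]
        exact Subgroup.mem_top g
      set η' : G →* ↥K :=
        { toFun := fun g => ⟨⁅x, g⁆, hK2' g⟩
          map_one' := Subtype.ext (by simp [commutatorElement_def])
          map_mul' := fun g1 g2 => Subtype.ext
            (comm_hom_eq_right (hKcent _ (hK2' g2))) } with hη'def
      have hle := commutator_le_ker_K_hom (fun k hk => hKcent k hk) η'
      apply hx
      apply mem_centralizer_of_commutator_le
      intro a ha
      have h2 : η' a = 1 := hle ha
      have h3 : ⁅x, a⁆ = 1 := by
        have := congrArg (Subtype.val : ↥K → G) h2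
        simpa [hη'def] using this
      exact Subgroup.mem_centralizer_singleton_iff.mpr
        (commutatorElement_eq_one_iff_commute.mp h3).eq.symm
    · exact h1
  have hcard1 := card_dom_eq_ker_mul_range ψ
  have hcard2 := card_dom_eq_ker_mul_range η
  rw [hrangeψ] at hcard1
  rw [hrangeη, hkerη] at hcard2
  have hkerc : Nat.card ↥((centralizer {x}).subgroupOf ψ.ker) = Nat.card ↥(centralizer {x}) :=
    Nat.card_congr (Subgroup.subgroupOfEquivOfLe hcentle).toEquiv
  rw [hkerc] at hcard2
  constructor
  · rw [hcard1, hcard2]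
    ring
  · -- second part via the quotient by C
    haveI : C.Normal := centralizer_commutator_normal
    have hidx := centralizer_commutator_index hp hgcd hG' hGZ
    have hcardQC : Nat.card (G ⧸ C) = p := by
      rw [← Subgroup.index_eq_card]
      exact hidx
    set φ : ↥(centralizer {x}) →* G ⧸ C := (QuotientGroup.mk' C).domRestrict (centralizer {x})
      with hφdef
    have hkerφ : φ.ker = C.subgroupOf (centralizer {x}) := by
      rw [hφdef, MonoidHom.ker_restrict, QuotientGroup.ker_mk']
    have hxmem : x ∈ centralizer {x} := Subgroup.mem_centralizer_singleton_iff.mpr rfl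
    have hrangeφ : Nat.card φ.range = p := by
      have hdvd : Nat.card φ.range ∣ p := by
        have := Subgroup.card_subgroup_dvd_card φ.range
        rwa [hcardQC] at this
      rcases hp.eq_one_or_self_of_dvd _ hdvd with h1 | h1
      · exfalso
        have hbot : φ.range = ⊥ := Subgroup.card_eq_one.mp h1
        have h2 : φ ⟨x, hxmem⟩ = 1 := by
          have : φ ⟨x, hxmem⟩ ∈ φ.range := ⟨⟨x, hxmem⟩, rfl⟩
          rwa [hbot, Subgroup.mem_bot] at this
        rw [hφdef] at h2
        have h3 : x ∈ C := by
          rw [← QuotientGroup.ker_mk' C]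
          exact h2
        exact hx h3
      · exact h1
    have hcard3 := card_dom_eq_ker_mul_range φ
    rw [hrangeφ, hkerφ] at hcard3
    have hkerc3 : Nat.card ↥(C.subgroupOf (centralizer {x})) =
        Nat.card ↥(C ⊓ centralizer {x}) := by
      rw [← Subgroup.inf_subgroupOf_right C (centralizer {x})]
      exact Nat.card_congr (Subgroup.subgroupOfEquivOfLe inf_le_right).toEquiv
    rw [hkerc3] at hcard3
    exact hcard3




private lemma fiber_count [Fintype G] [DecidableEq G] (P : G → G → Prop)
    [∀ x y, Decidable (P x y)] (A : Finset G) :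
    (Finset.univ.filter fun q : G × G => P q.1 q.2 ∧ q.1 ∈ A).card
      = ∑ x ∈ A, (Finset.univ.filter fun y => P x y).card := by
  rw [Finset.card_eq_sum_card_fiberwise (f := Prod.fst) (t := A)
    (fun q hq => (Finset.mem_filter.mp hq).2.2)]
  apply Finset.sum_congr rfl
  intro x hx
  apply Finset.card_bij (fun q _ => q.2)
  · intro q hq
    simp only [Finset.mem_filter, Finset.mem_univ, true_and] at hq ⊢
    rw [← hq.2]
    exact hq.1.1
  · intro q1 hq1 q2 hq2 he
    simp only [Finset.mem_filter, Finset.mem_univ, true_and] at hq1 hq2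
    exact Prod.ext (hq1.2.trans hq2.2.symm) he
  · intro y hy
    simp only [Finset.mem_filter, Finset.mem_univ, true_and] at hy
    refine ⟨(x, y), ?_, rfl⟩
    simp only [Finset.mem_filter, Finset.mem_univ, true_and]
    exact ⟨⟨hy, hx⟩, trivial⟩

private lemma filter_mem_card [Fintype G] (H : Subgroup G) [DecidablePred (· ∈ H)] :
    (Finset.univ.filter fun y => y ∈ H).card = Nat.card ↥H := by
  rw [Nat.card_eq_fintype_card]
  exact (Fintype.card_subtype _).symm


end CommProbAux

/-- Let `G` be a finite group and `p` a prime such that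
`gcd (p-1, |G|) = 1`. Suppose `|G'| = p^2`, `|G' ∩ Z(G)| = p`, the centralizer
`C_G(G')` is non-abelian, and let `s ≥ 1` with `p^(2s) = |C_G(G') : Z(C_G(G'))|`.
Then `Pr(G) = (1/p^4) ((p-1)/p^(2s-1) + p^2 + p - 1)`. -/
theorem commProb_eq_of_centralizer_commutator_nonabelian (G : Type*) [Group G] [Finite G]
    (p : ℕ) (hp : p.Prime)
    (hgcd : Nat.gcd (p - 1) (Nat.card G) = 1)
    (hG' : Nat.card ↥(commutator G) = p ^ 2)
    (hGZ : Nat.card ↥(commutator G ⊓ Subgroup.center G) = p)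
    (hnab : ¬ ∀ x y : ↥(Subgroup.centralizer (commutator G : Set G)), x * y = y * x)
    (s : ℕ) (hs : 0 < s)
    (hps : p ^ (2 * s) =
      (Subgroup.center ↥(Subgroup.centralizer (commutator G : Set G))).index) :
    commProb G =
      (1 / (p : ℚ) ^ 4) * (((p : ℚ) - 1) / (p : ℚ) ^ (2 * s - 1) + (p : ℚ) ^ 2 + p - 1) := by
  classical
  haveI : Fintype G := Fintype.ofFinite G
  obtain ⟨s', rfl⟩ : ∃ s', s = s' + 1 := ⟨s - 1, by omega⟩
  set C : Subgroup G := Subgroup.centralizer (commutator G : Set G) with hCdef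
  set z : ℕ := Nat.card ↥(Subgroup.center ↥C) with hzdef
  have hzpos : 0 < z := Nat.card_pos
  have hppos : 0 < p := hp.pos
  set c : ℕ := Nat.card ↥C with hcdef
  have hcardC : c = p ^ (2 * s' + 2) * z := by
    have h := Subgroup.card_mul_index (Subgroup.center ↥C)
    rw [← hps] at h
    have h2 : 2 * (s' + 1) = 2 * s' + 2 := by ring
    rw [hcdef, hzdef, ← h, h2]
    ring
  have hidx : C.index = p := centralizer_commutator_index hp hgcd hG' hGZ
  have hcardG : Nat.card G = p ^ (2 * s' + 3) * z := by
    have h := Subgroup.card_mul_index C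
    rw [hidx, ← hcdef] at h
    rw [← h, hcardC]
    ring
  -- counting commuting pairs
  set Pcent : G → Prop := fun x => ∀ y ∈ C, x * y = y * x with hPdef
  set f1 : G → ℕ := fun x => (Finset.univ.filter fun y => Commute x y ∧ y ∈ C).card with hf1
  set f2 : G → ℕ := fun x => (Finset.univ.filter fun y => Commute x y ∧ y ∉ C).card with hf2
  -- pointwise values
  have hV1 : ∀ x ∈ C, Pcent x → f1 x = c := by
    intro x hxC hxc
    simp only [hf1]
    have he : (Finset.univ.filter fun y => Commute x y ∧ y ∈ C)
        = Finset.univ.filter fun y => y ∈ C := by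
      apply Finset.filter_congr
      intro y _
      constructor
      · exact fun h => h.2
      · exact fun h => ⟨hxc y h, h⟩
    rw [he, filter_mem_card]
  have hinfcount : ∀ x : G,
      (Finset.univ.filter fun y => Commute x y ∧ y ∈ C).card
        = Nat.card ↥(C ⊓ Subgroup.centralizer {x}) := by
    intro x
    have he : (Finset.univ.filter fun y => Commute x y ∧ y ∈ C)
        = Finset.univ.filter fun y => y ∈ C ⊓ Subgroup.centralizer {x} := by
      apply Finset.filter_congr
      intro y _
      simp only [Subgroup.mem_inf]
      constructor
      · exact fun h => ⟨h.2, Subgroup.mem_centralizer_singleton_iff.mpr h.1.eq.symm⟩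
      · exact fun h => ⟨(Subgroup.mem_centralizer_singleton_iff.mp h.2).symm, h.1⟩
    rw [he, filter_mem_card]
  have hV2 : ∀ x ∈ C, ¬ Pcent x → f1 x = p ^ (2 * s' + 1) * z := by
    intro x hxC hxnc
    simp only [hf1]
    rw [hinfcount x]
    have hnc : ∃ y ∈ C, ¬ x * y = y * x := by
      simp only [hPdef] at hxnc
      push_neg at hxnc
      exact hxnc
    have h := card_C_eq_of_noncentral hp hG' hGZ hxC hnc
    rw [← hcdef, hcardC] at h
    have h2 : Nat.card ↥(C ⊓ Subgroup.centralizer {x}) * p = p ^ (2 * s' + 1) * z * p := by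
      rw [← h]; ring
    exact Nat.eq_of_mul_eq_mul_right hppos h2
  have hV3 : ∀ x : G, x ∉ C → f1 x = p ^ (2 * s') * z ∧ f1 x + f2 x = p ^ (2 * s' + 1) * z := by
    intro x hxC
    obtain ⟨hA, hB⟩ := card_of_not_mem_centralizer hp hgcd hG' hGZ hxC
    have hcent : Nat.card ↥(Subgroup.centralizer {x}) = p ^ (2 * s' + 1) * z := by
      apply Nat.eq_of_mul_eq_mul_right (show 0 < p ^ 2 by positivity)
      rw [← hA, hcardG]; ring
    have hinf : Nat.card ↥(C ⊓ Subgroup.centralizer {x}) = p ^ (2 * s') * z := by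
      apply Nat.eq_of_mul_eq_mul_right hppos
      rw [← hB, hcent]; ring
    have hsum : f1 x + f2 x = Nat.card ↥(Subgroup.centralizer {x}) := by
      simp only [hf1, hf2]
      have hsplit := Finset.card_filter_add_card_filter_not
        (s := Finset.univ.filter fun y => Commute x y) (p := fun y => y ∈ C)
      rw [Finset.filter_filter, Finset.filter_filter] at hsplit
      rw [hsplit]
      -- (univ.filter (Commute x ·)).card = card centralizer {x}
      have he : (Finset.univ.filter fun y => Commute x y)
          = Finset.univ.filter fun y => y ∈ Subgroup.centralizer {x} := by
        apply Finset.filter_congr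
        intro y _
        constructor
        · exact fun h => Subgroup.mem_centralizer_singleton_iff.mpr h.eq.symm
        · exact fun h => (Subgroup.mem_centralizer_singleton_iff.mp h).symm
      rw [he, filter_mem_card]
    constructor
    · simp only [hf1]
      rw [hinfcount x, hinf]
    · rw [hsum, hcent]
  -- counts of the regions
  have hcountC : (Finset.univ.filter fun x => x ∈ C).card = c := by
    rw [filter_mem_card, hcdef]
  have hcountZ : (Finset.univ.filter fun x => x ∈ C ∧ Pcent x).card = z := by
    have he : {x : G // x ∈ C ∧ Pcent x} ≃ ↥(Subgroup.center ↥C) :=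
      { toFun := fun x => ⟨⟨x.1, x.2.1⟩,
          Subgroup.mem_center_iff.mpr fun y => Subtype.ext (x.2.2 y y.2).symm⟩
        invFun := fun w => ⟨(w.1 : G), w.1.2, fun y hy =>
          (congrArg (Subtype.val : ↥C → G) (Subgroup.mem_center_iff.mp w.2 ⟨y, hy⟩)).symm⟩
        left_inv := fun x => rfl
        right_inv := fun w => rfl }
    calc (Finset.univ.filter fun x => x ∈ C ∧ Pcent x).card
        = Nat.card {x : G // x ∈ C ∧ Pcent x} := by
          rw [Nat.card_eq_fintype_card]
          exact (Fintype.card_subtype _).symm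
      _ = Nat.card ↥(Subgroup.center ↥C) := Nat.card_congr he
      _ = z := by rw [hzdef]
  have hcountnC : (Finset.univ.filter fun x => x ∉ C).card + c = p ^ (2 * s' + 3) * z := by
    have h := Finset.card_filter_add_card_filter_not
      (s := (Finset.univ : Finset G)) (p := fun x => x ∈ C)
    rw [hcountC] at h
    rw [Nat.add_comm]
    rw [h]
    rw [Finset.card_univ, ← Nat.card_eq_fintype_card, hcardG]
  set n3 : ℕ := (Finset.univ.filter fun x => x ∉ C).card with hn3
  set AC : Finset G := Finset.univ.filter (fun x => x ∈ C) with hAC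
  set AN : Finset G := Finset.univ.filter (fun x => x ∉ C) with hAN
  have hACmem : ∀ x : G, x ∈ AC ↔ x ∈ C := by
    intro x
    rw [hAC, Finset.mem_filter]
    simp
  have hANmem : ∀ x : G, x ∈ AN ↔ x ∉ C := by
    intro x
    rw [hAN, Finset.mem_filter]
    simp
  -- swap identity
  have hswap : ∑ x ∈ AC, f2 x = ∑ x ∈ AN, f1 x := by
    simp only [hf1, hf2]
    rw [← fiber_count (fun x y => Commute x y ∧ y ∉ C) AC,
      ← fiber_count (fun x y => Commute x y ∧ y ∈ C) AN]
    apply Finset.card_bij (fun q _ => (q.2, q.1))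
    · intro q hq
      simp only [Finset.mem_filter, Finset.mem_univ, true_and, hACmem, hANmem] at hq ⊢
      exact ⟨⟨hq.1.1.symm, hq.2⟩, hq.1.2⟩
    · intro q1 hq1 q2 hq2 he
      have h1 := congrArg Prod.fst he
      have h2 := congrArg Prod.snd he
      exact Prod.ext h2 h1
    · intro q hq
      simp only [Finset.mem_filter, Finset.mem_univ, true_and, hACmem, hANmem] at hq ⊢
      exact ⟨(q.2, q.1), ⟨⟨hq.1.1.symm, hq.2⟩, hq.1.2⟩, rfl⟩
  have hxsplit : ∀ x : G, (Finset.univ.filter fun y => Commute x y).card = f1 x + f2 x := by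
    intro x
    simp only [hf1, hf2]
    have hsplit := Finset.card_filter_add_card_filter_not
      (s := Finset.univ.filter fun y => Commute x y) (p := fun y => y ∈ C)
    rw [Finset.filter_filter, Finset.filter_filter] at hsplit
    omega
  have hS : Nat.card { q : G × G // Commute q.1 q.2 }
      = (∑ x ∈ AC, f1 x + ∑ x ∈ AC, f2 x) + (∑ x ∈ AN, f1 x + ∑ x ∈ AN, f2 x) := by
    have h0 : Nat.card { q : G × G // Commute q.1 q.2 }
        = (Finset.univ.filter fun q : G × G => Commute q.1 q.2).card := by
      rw [Nat.card_eq_fintype_card]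
      exact Fintype.card_subtype _
    have h1 : (Finset.univ.filter fun q : G × G => Commute q.1 q.2)
        = Finset.univ.filter fun q : G × G =>
            Commute q.1 q.2 ∧ q.1 ∈ (Finset.univ : Finset G) := by
      apply Finset.filter_congr
      intro q _
      simp
    rw [h0, h1, fiber_count (fun x y => Commute x y) (Finset.univ : Finset G)]
    rw [Finset.sum_congr rfl (fun x _ => hxsplit x)]
    rw [← Finset.sum_filter_add_sum_filter_not Finset.univ (fun x => x ∈ C)
      (fun x => f1 x + f2 x)]
    rw [← hAC, ← hAN, Finset.sum_add_distrib, Finset.sum_add_distrib]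
  -- evaluate the four sums
  have hACcard : AC.card = c := by rw [hAC]; exact hcountC
  have hANcard : AN.card = n3 := by rw [hAN, hn3]
  have hsum1 : ∑ x ∈ AC, f1 x = z * c + (c - z) * (p ^ (2 * s' + 1) * z) := by
    rw [← Finset.sum_filter_add_sum_filter_not AC Pcent f1]
    have hcard1 : (AC.filter Pcent).card = z := by
      rw [hAC, Finset.filter_filter]
      exact hcountZ
    have hcard2 : (AC.filter (fun x => ¬ Pcent x)).card = c - z := by
      have h := Finset.card_filter_add_card_filter_not (s := AC) (p := Pcent)
      rw [hcard1, hACcard] at h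
      omega
    have hp1 : ∑ x ∈ AC.filter Pcent, f1 x = (AC.filter Pcent).card * c := by
      apply Finset.sum_const_nat
      intro x hx
      have hx' := Finset.mem_filter.mp hx
      exact hV1 x ((hACmem x).mp hx'.1) hx'.2
    have hp2 : ∑ x ∈ AC.filter (fun x => ¬ Pcent x), f1 x
        = (AC.filter (fun x => ¬ Pcent x)).card * (p ^ (2 * s' + 1) * z) := by
      apply Finset.sum_const_nat
      intro x hx
      have hx' := Finset.mem_filter.mp hx
      exact hV2 x ((hACmem x).mp hx'.1) hx'.2
    rw [hp1, hp2, hcard1, hcard2]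
  have hsum2 : ∑ x ∈ AN, f1 x = n3 * (p ^ (2 * s') * z) := by
    rw [← hANcard]
    apply Finset.sum_const_nat
    intro x hx
    exact (hV3 x ((hANmem x).mp hx)).1
  have hsum3 : ∑ x ∈ AN, f1 x + ∑ x ∈ AN, f2 x = n3 * (p ^ (2 * s' + 1) * z) := by
    rw [← Finset.sum_add_distrib, ← hANcard]
    apply Finset.sum_const_nat
    intro x hx
    exact (hV3 x ((hANmem x).mp hx)).2
  have htotal : Nat.card { q : G × G // Commute q.1 q.2 }
      = z * c + (c - z) * (p ^ (2 * s' + 1) * z) + n3 * (p ^ (2 * s') * z)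
        + n3 * (p ^ (2 * s' + 1) * z) := by
    rw [hS, hsum1, hswap, hsum3, hsum2]
  -- final rational computation
  rw [commProb_def, htotal, hcardG]
  have hzc : z ≤ c := by
    rw [hcardC]
    exact Nat.le_mul_of_pos_left z (by positivity)
  have hcq : (c : ℚ) = (p : ℚ) ^ (2 * s' + 2) * z := by
    rw [hcardC]
    push_cast
    ring
  have hn3q : (n3 : ℚ) = (p : ℚ) ^ (2 * s' + 3) * z - (p : ℚ) ^ (2 * s' + 2) * z := by
    have h := congrArg (fun t : ℕ => (t : ℚ)) hcountnC
    push_cast at h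
    rw [hcq] at h
    linarith
  have hexp : 2 * (s' + 1) - 1 = 2 * s' + 1 := by omega
  rw [hexp]
  push_cast [Nat.cast_sub hzc]
  rw [hcq, hn3q]
  have hpq0 : (p : ℚ) ≠ 0 := Nat.cast_ne_zero.mpr hp.pos.ne'
  have hzq0 : (z : ℚ) ≠ 0 := Nat.cast_ne_zero.mpr hzpos.ne'
  field_simp
  ring
end

section
/- Let G be a finite group and p a prime such that gcd(p-1, |G|) = 1. Suppose |G'| = p^2, |G' ∩ Z(G)| = p, and the centralizer C_G(G') is abelian. Then |G/Z(G)| = p^3. -/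
open Subgroup
open scoped Pointwise
open scoped commutatorElement

namespace CardCentralQuotAux

variable {G : Type*} [Group G]

theorem map_conjNormal_subgroupOf (H N : Subgroup G) [H.Normal] [hN : N.Normal] (g : G) :
    (N.subgroupOf H).map ((MulAut.conjNormal g : MulAut H) : H →* H) = N.subgroupOf H := by
  ext x
  simp only [Subgroup.mem_map]
  constructor
  · rintro ⟨y, hy, rfl⟩
    rw [Subgroup.mem_subgroupOf] at hy ⊢
    simpa using hN.conj_mem _ hy g
  · intro hx
    refine ⟨(MulAut.conjNormal g).symm x, ?_, by simp⟩
    rw [Subgroup.mem_subgroupOf] at hx ⊢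
    rw [show (((MulAut.conjNormal g).symm x : H) : G) = g⁻¹ * x * g from
      MulAut.conjNormal_symm_apply g x]
    simpa using hN.conj_mem _ hx g⁻¹

/-- Conjugation action of `G` on the quotient `H ⧸ N` for normal subgroups `N ≤ H`. -/
noncomputable def conjQuotAut (H N : Subgroup G) [H.Normal] [hN : N.Normal] :
    G →* MulAut (↥H ⧸ N.subgroupOf H) where
  toFun g := QuotientGroup.congr (N.subgroupOf H) (N.subgroupOf H) (MulAut.conjNormal g)
      (map_conjNormal_subgroupOf H N g)
  map_one' := by
    ext q
    induction q using QuotientGroup.induction_on with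
    | _ x =>
      show QuotientGroup.mk (MulAut.conjNormal (1:G) x) = _
      simp
  map_mul' g₁ g₂ := by
    ext q
    induction q using QuotientGroup.induction_on with
    | _ x =>
      show QuotientGroup.mk (MulAut.conjNormal (g₁ * g₂) x)
        = QuotientGroup.mk (MulAut.conjNormal g₁ (MulAut.conjNormal g₂ x))
      rw [map_mul]
      rfl

theorem conjQuotAut_apply (H N : Subgroup G) [H.Normal] [hN : N.Normal] (g : G) (x : H) :
    conjQuotAut H N g (QuotientGroup.mk x) = QuotientGroup.mk (MulAut.conjNormal g x) := rfl

end CardCentralQuotAux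


/-- Let `G` be a finite group and `p` a prime such that
`gcd (p-1, |G|) = 1`. Suppose `|G'| = p^2`, `|G' ∩ Z(G)| = p`, and the centralizer
`C_G(G')` is abelian. Then `|G/Z(G)| = p^3`. -/
theorem card_central_quotient_of_centralizer_commutator_abelian (G : Type*) [Group G] [Finite G]
    (p : ℕ) (hp : p.Prime)
    (hgcd : Nat.gcd (p - 1) (Nat.card G) = 1)
    (hG' : Nat.card ↥(commutator G) = p ^ 2)
    (hGZ : Nat.card ↥(commutator G ⊓ Subgroup.center G) = p)
    (hab : ∀ x y : ↥(Subgroup.centralizer (commutator G : Set G)), x * y = y * x) :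
    Nat.card (G ⧸ Subgroup.center G) = p ^ 3 := by
  haveI : Fact p.Prime := ⟨hp⟩
  set Γ : Subgroup G := commutator G with hΓdef
  set N : Subgroup G := commutator G ⊓ Subgroup.center G with hNdef
  set C : Subgroup G := Subgroup.centralizer (commutator G : Set G) with hCdef
  have hp1 : 1 < p := hp.one_lt
  have hNle : N ≤ Γ := inf_le_left
  have hNc : ∀ n ∈ N, ∀ x : G, n * x = x * n := fun n hn x =>
    (Subgroup.mem_center_iff.mp ((inf_le_right : _root_.commutator G ⊓ Subgroup.center G ≤ Subgroup.center G) hn) x).symm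
  have hCcomm : ∀ x ∈ C, ∀ y ∈ C, x * y = y * x := fun x hx y hy =>
    congrArg Subtype.val (hab ⟨x, hx⟩ ⟨y, hy⟩)
  -- Step A : every commutator [g, a] with a ∈ Γ lies in N
  haveI hΓnormal : Γ.Normal := Subgroup.commutator_normal ⊤ ⊤
  haveI hNnormal : N.Normal := Subgroup.normal_inf_normal _ _
  haveI hCnormal : C.Normal :=
    inferInstanceAs (Subgroup.centralizer ((commutator G : Subgroup G) : Set G)).Normal
  have hA : ∀ g : G, ∀ a ∈ Γ, g * a * g⁻¹ * a⁻¹ ∈ N := by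
    have cardsub : Nat.card ↥(N.subgroupOf Γ) = p :=
      (Nat.card_congr (Subgroup.subgroupOfEquivOfLe hNle).toEquiv).trans hGZ
    have cardQ : Nat.card (↥Γ ⧸ N.subgroupOf Γ) = p := by
      have h1 : Nat.card ↥Γ = Nat.card (↥Γ ⧸ N.subgroupOf Γ) * Nat.card ↥(N.subgroupOf Γ) :=
        Subgroup.card_eq_card_quotient_mul_card_subgroup _
      rw [hG', cardsub] at h1
      have h2 : p * p = Nat.card (↥Γ ⧸ N.subgroupOf Γ) * p := by rw [← h1]; ring
      exact (Nat.eq_of_mul_eq_mul_right (by omega) h2).symm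
    haveI : IsCyclic (↥Γ ⧸ N.subgroupOf Γ) := isCyclic_of_prime_card cardQ
    have cardAut : Nat.card (MulAut (↥Γ ⧸ N.subgroupOf Γ)) = p - 1 := by
      rw [IsCyclic.card_mulAut, cardQ, Nat.totient_prime hp]
    set ρ := CardCentralQuotAux.conjQuotAut Γ N with hρdef
    intro g a ha
    have h1 : orderOf (ρ g) ∣ Nat.card G := by
      apply orderOf_dvd_of_pow_eq_one
      rw [← map_pow, pow_card_eq_one', map_one]
    have h2 : orderOf (ρ g) ∣ p - 1 := cardAut ▸ orderOf_dvd_natCard (ρ g)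
    have h3 : orderOf (ρ g) = 1 := Nat.eq_one_of_dvd_one (hgcd ▸ Nat.dvd_gcd h2 h1)
    have hρ1 : ρ g = 1 := orderOf_eq_one_iff.mp h3
    have h4 : QuotientGroup.mk (MulAut.conjNormal g (⟨a, ha⟩ : ↥Γ))
        = (QuotientGroup.mk (⟨a, ha⟩ : ↥Γ) : ↥Γ ⧸ N.subgroupOf Γ) := by
      rw [← CardCentralQuotAux.conjQuotAut_apply Γ N g, ← hρdef, hρ1]
      rfl
    have h5 := QuotientGroup.eq.mp h4
    rw [Subgroup.mem_subgroupOf] at h5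
    have h6 : ((g * a * g⁻¹)⁻¹ * a) ∈ N := by simpa using h5
    have h7 := hNnormal.conj_mem _ (N.inv_mem h6) a
    have h8 : a * ((g * a * g⁻¹)⁻¹ * a)⁻¹ * a⁻¹ = g * a * g⁻¹ * a⁻¹ := by group
    rwa [h8] at h7
  -- an element of Γ outside N
  obtain ⟨a₀, ha₀Γ, ha₀N⟩ : ∃ a₀ ∈ Γ, a₀ ∉ N := by
    by_contra h
    push_neg at h
    have hd := Subgroup.card_dvd_of_le (show Γ ≤ N from fun a ha => h a ha)
    rw [hG', hGZ] at hd
    have := Nat.le_of_dvd (by omega) hd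
    nlinarith
  -- Γ = N ⊔ zpowers a₀
  have hsupΓ : N ⊔ Subgroup.zpowers a₀ = Γ := by
    have hle : N ⊔ Subgroup.zpowers a₀ ≤ Γ := sup_le hNle (Subgroup.zpowers_le.mpr ha₀Γ)
    have hdvd : Nat.card ↥(N ⊔ Subgroup.zpowers a₀) ∣ p ^ 2 :=
      hG' ▸ Subgroup.card_dvd_of_le hle
    have hpd : p ∣ Nat.card ↥(N ⊔ Subgroup.zpowers a₀) :=
      hGZ ▸ Subgroup.card_dvd_of_le le_sup_left
    obtain ⟨k, hk2, hcard⟩ := (Nat.dvd_prime_pow hp).mp hdvd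
    interval_cases k
    · rw [pow_zero] at hcard
      rw [hcard] at hpd
      exact absurd (Nat.le_of_dvd one_pos hpd) (by omega)
    · exfalso
      rw [pow_one] at hcard
      have hNH : N = N ⊔ Subgroup.zpowers a₀ :=
        Subgroup.eq_of_le_of_card_ge le_sup_left (le_of_eq (by rw [hGZ, hcard]))
      rw [hNH] at ha₀N
      exact ha₀N (Subgroup.mem_sup_right (Subgroup.mem_zpowers a₀))
    · exact Subgroup.eq_of_le_of_card_ge hle (le_of_eq (by rw [hG', hcard]))
  -- decomposition of elements of Γ
  have hdecomp : ∀ a ∈ Γ, ∃ n ∈ N, ∃ k : ℤ, n * a₀ ^ k = a := by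
    intro a ha
    rw [← hsupΓ] at ha
    have : a ∈ (N : Set G) * (Subgroup.zpowers a₀ : Set G) := by
      rw [← Subgroup.normal_mul]
      exact_mod_cast ha
    obtain ⟨n, hn, z, hz, rfl⟩ := this
    obtain ⟨k, rfl⟩ := Subgroup.mem_zpowers_iff.mp hz
    exact ⟨n, hn, k, rfl⟩
  -- the commutator subgroup is contained in the centralizer C
  have hΓC : Γ ≤ C := by
    intro a ha
    rw [hCdef, Subgroup.mem_centralizer_iff]
    intro b hb
    obtain ⟨n, hn, i, rfl⟩ := hdecomp a ha
    obtain ⟨m, hm, j, rfl⟩ := hdecomp b hb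
    have cm : ∀ x : G, Commute m x := fun x => hNc m hm x
    have cn : ∀ x : G, Commute n x := fun x => hNc n hn x
    exact (cm _).mul_left (((cn _).symm).mul_right ((Commute.refl a₀).zpow_zpow j i))
  -- C ≠ ⊤
  have hCne : C ≠ ⊤ := by
    intro h
    have hsub : (Γ : Set G) ⊆ Subgroup.center G := by
      rw [hCdef] at h
      exact Subgroup.centralizer_eq_top_iff_subset.mp h
    have hNΓ : N = Γ := le_antisymm hNle (le_inf le_rfl (fun x hx => hsub hx))
    rw [hNΓ, hG'] at hGZ
    nlinarith
  -- the index of C is p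
  have hCidx : C.index = p := by
    have fmul : ∀ g h : G, (g * h) * a₀ * (g * h)⁻¹ * a₀⁻¹
        = (g * a₀ * g⁻¹ * a₀⁻¹) * (h * a₀ * h⁻¹ * a₀⁻¹) := by
      intro g h
      have hu : ∀ x : G, (h * a₀ * h⁻¹ * a₀⁻¹) * x = x * (h * a₀ * h⁻¹ * a₀⁻¹) :=
        hNc _ (hA h a₀ ha₀Γ)
      calc (g * h) * a₀ * (g * h)⁻¹ * a₀⁻¹
          = g * ((h * a₀ * h⁻¹ * a₀⁻¹) * a₀) * g⁻¹ * a₀⁻¹ := by group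
        _ = (g * (h * a₀ * h⁻¹ * a₀⁻¹)) * (a₀ * g⁻¹ * a₀⁻¹) := by group
        _ = ((h * a₀ * h⁻¹ * a₀⁻¹) * g) * (a₀ * g⁻¹ * a₀⁻¹) := by rw [← hu g]
        _ = (h * a₀ * h⁻¹ * a₀⁻¹) * (g * a₀ * g⁻¹ * a₀⁻¹) := by group
        _ = (g * a₀ * g⁻¹ * a₀⁻¹) * (h * a₀ * h⁻¹ * a₀⁻¹) := hu _
    set f : G →* ↥N := { toFun := fun g => ⟨g * a₀ * g⁻¹ * a₀⁻¹, hA g a₀ ha₀Γ⟩,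
                         map_one' := by ext; simp,
                         map_mul' := fun g h => by ext; exact fmul g h } with hfdef
    have hkerf : f.ker = C := by
      ext g
      rw [MonoidHom.mem_ker]
      constructor
      · intro h
        have h1 : g * a₀ * g⁻¹ * a₀⁻¹ = 1 := congrArg Subtype.val h
        have hcga : Commute g a₀ := by
          have := mul_inv_eq_one.mp h1
          exact (mul_inv_eq_iff_eq_mul.mp this)
        rw [hCdef, Subgroup.mem_centralizer_iff]
        intro b hb
        obtain ⟨n, hn, k, rfl⟩ := hdecomp b hb
        exact (show Commute n g from hNc n hn g).mul_left ((hcga.symm).zpow_left k)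
      · intro hgC
        have := Subgroup.mem_centralizer_iff.mp hgC a₀ ha₀Γ
        ext
        show g * a₀ * g⁻¹ * a₀⁻¹ = 1
        rw [← this]
        group
    have hdvd : C.index ∣ p := by
      have h1 : Nat.card (G ⧸ f.ker) ∣ Nat.card ↥N :=
        Subgroup.card_dvd_of_injective (QuotientGroup.kerLift f)
          (QuotientGroup.kerLift_injective f)
      rw [hkerf, hGZ] at h1
      rw [Subgroup.index_eq_card]
      exact h1
    rcases (Nat.dvd_prime hp).mp hdvd with h | h
    · exact absurd (Subgroup.index_eq_one.mp h) hCne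
    · exact h
  -- choose g₀ ∉ C
  obtain ⟨g₀, hg₀⟩ : ∃ g₀ : G, g₀ ∉ C := by
    by_contra h
    push_neg at h
    exact hCne ((Subgroup.eq_top_iff' C).mpr h)
  -- subgroups containing C and g₀ are ⊤
  have hsup : ∀ K : Subgroup G, C ≤ K → g₀ ∈ K → K = ⊤ := by
    intro K hCK hg₀K
    have h1 : K.index ∣ p := hCidx ▸ Subgroup.index_dvd_of_le hCK
    rcases (Nat.dvd_prime hp).mp h1 with h | h
    · exact Subgroup.index_eq_one.mp h
    · exfalso
      have h2 : C.relIndex K * K.index = C.index := Subgroup.relIndex_mul_index hCK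
      rw [h, hCidx] at h2
      have h3 : C.relIndex K = 1 :=
        Nat.eq_of_mul_eq_mul_right (by omega) (h2.trans (one_mul p).symm)
      exact hg₀ (Subgroup.relIndex_eq_one.mp h3 hg₀K)
  -- the commutator-with-g₀ homomorphism on C
  have hcommCg : ∀ c : C, (c : G) * g₀ * (c : G)⁻¹ * g₀⁻¹ ∈ Γ := fun c => by
    exact Subgroup.commutator_mem_commutator (Subgroup.mem_top _) (Subgroup.mem_top _)
  -- φ : C →* G, c ↦ [c, g₀]
  have φmul : ∀ c₁ c₂ : C, ((c₁*c₂ : C) : G) * g₀ * ((c₁*c₂ : C) : G)⁻¹ * g₀⁻¹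
      = ((c₁ : G) * g₀ * (c₁ : G)⁻¹ * g₀⁻¹) * ((c₂ : G) * g₀ * (c₂ : G)⁻¹ * g₀⁻¹) := by
    intro c₁ c₂
    have hu : ∀ x ∈ C, ((c₂ : G) * g₀ * (c₂ : G)⁻¹ * g₀⁻¹) * x
        = x * ((c₂ : G) * g₀ * (c₂ : G)⁻¹ * g₀⁻¹) := fun x hx =>
      hCcomm _ (hΓC (hcommCg c₂)) x hx
    have hcoe : ((c₁ * c₂ : C) : G) = (c₁ : G) * (c₂ : G) := rfl
    rw [hcoe, mul_inv_rev]
    calc (c₁ : G) * (c₂ : G) * g₀ * ((c₂ : G)⁻¹ * (c₁ : G)⁻¹) * g₀⁻¹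
        = ((c₁ : G) * ((c₂ : G) * g₀ * (c₂ : G)⁻¹ * g₀⁻¹)) * (g₀ * (c₁ : G)⁻¹ * g₀⁻¹) := by
          group
      _ = (((c₂ : G) * g₀ * (c₂ : G)⁻¹ * g₀⁻¹) * (c₁ : G)) * (g₀ * (c₁ : G)⁻¹ * g₀⁻¹) := by
          rw [← hu _ c₁.2]
      _ = ((c₂ : G) * g₀ * (c₂ : G)⁻¹ * g₀⁻¹) * ((c₁ : G) * g₀ * (c₁ : G)⁻¹ * g₀⁻¹) := by
          group
      _ = ((c₁ : G) * g₀ * (c₁ : G)⁻¹ * g₀⁻¹) * ((c₂ : G) * g₀ * (c₂ : G)⁻¹ * g₀⁻¹) := by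
          rw [hu _ (hΓC (hcommCg c₁))]
  set φ : C →* G := { toFun := fun c => (c : G) * g₀ * (c : G)⁻¹ * g₀⁻¹,
                      map_one' := by simp,
                      map_mul' := φmul } with hφdef
  set M : Subgroup G := φ.range with hMdef
  have hMΓ : M ≤ Γ := by
    rintro x ⟨c, rfl⟩
    exact hcommCg c
  -- M is normal
  have hMnormal : M.Normal := by
    rw [← Subgroup.normalizer_eq_top_iff]
    apply hsup
    · intro c hc
      rw [Subgroup.mem_normalizer_iff]
      intro h
      constructor
      · intro hh
        have heq : c * h * c⁻¹ = h := by rw [hCcomm c hc h (hΓC (hMΓ hh))]; group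
        rwa [heq]
      · intro hh
        have hx := hCcomm c hc _ (hΓC (hMΓ hh))
        have h3 : c * (c * h * c⁻¹) = c * h := by rw [hx]; group
        have h4 : c * h * c⁻¹ = h := mul_left_cancel h3
        exact h4 ▸ hh
    · rw [Subgroup.mem_normalizer_iff]
      intro h
      constructor
      · rintro ⟨c, rfl⟩
        refine ⟨⟨g₀ * c * g₀⁻¹, hCnormal.conj_mem _ c.2 g₀⟩, ?_⟩
        show (g₀ * c * g₀⁻¹) * g₀ * (g₀ * c * g₀⁻¹)⁻¹ * g₀⁻¹
          = g₀ * ((c : G) * g₀ * (c : G)⁻¹ * g₀⁻¹) * g₀⁻¹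
        group
      · rintro ⟨c, hc⟩
        refine ⟨⟨g₀⁻¹ * c * g₀, by simpa using hCnormal.conj_mem _ c.2 g₀⁻¹⟩, ?_⟩
        show (g₀⁻¹ * c * g₀) * g₀ * (g₀⁻¹ * c * g₀)⁻¹ * g₀⁻¹ = h
        have hcval : (c : G) * g₀ * (c : G)⁻¹ * g₀⁻¹ = g₀ * h * g₀⁻¹ := hc
        have hh : h = g₀⁻¹ * ((c : G) * g₀ * (c : G)⁻¹ * g₀⁻¹) * g₀ := by rw [hcval]; group
        rw [hh]; group
  -- Γ ≤ M
  have hΓM : Γ ≤ M := by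
    haveI := hMnormal
    have hMC : M ≤ C := le_trans hMΓ hΓC
    set ψ : (G ⧸ M) →* (G ⧸ C) := QuotientGroup.map M C (MonoidHom.id G) (by simpa using hMC)
      with hψdef
    haveI : IsCyclic (G ⧸ C) :=
      isCyclic_of_prime_card (by rw [← Subgroup.index_eq_card, hCidx])
    have hker : ψ.ker ≤ Subgroup.center (G ⧸ M) := by
      intro q hq
      induction q using QuotientGroup.induction_on with
      | _ x =>
        have hxC : x ∈ C := by
          rw [MonoidHom.mem_ker, hψdef, QuotientGroup.map_mk] at hq
          exact (QuotientGroup.eq_one_iff x).mp hq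
        rw [Subgroup.mem_center_iff]
        intro r
        induction r using QuotientGroup.induction_on with
        | _ y =>
          have hKtop := hsup
            (Subgroup.comap (QuotientGroup.mk' M) (Subgroup.centralizer {((x : G) : G ⧸ M)}))
            ?_ ?_
          · have hy : y ∈ Subgroup.comap (QuotientGroup.mk' M)
                (Subgroup.centralizer {((x : G) : G ⧸ M)}) := by rw [hKtop]; trivial
            rw [Subgroup.mem_comap] at hy
            exact Subgroup.mem_centralizer_singleton_iff.mp hy
          · intro d hd
            rw [Subgroup.mem_comap, Subgroup.mem_centralizer_singleton_iff]
            show ((d * x : G) : G ⧸ M) = ((x * d : G) : G ⧸ M)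
            rw [hCcomm d hd x hxC]
          · rw [Subgroup.mem_comap, Subgroup.mem_centralizer_singleton_iff]
            show ((g₀ * x : G) : G ⧸ M) = ((x * g₀ : G) : G ⧸ M)
            apply QuotientGroup.eq.mpr
            have hu : (x⁻¹ * g₀ * x * g₀⁻¹) ∈ M := ⟨⟨x⁻¹, C.inv_mem hxC⟩, by
              show x⁻¹ * g₀ * x⁻¹⁻¹ * g₀⁻¹ = x⁻¹ * g₀ * x * g₀⁻¹
              group⟩
            have h7 := hMnormal.conj_mem _ (M.inv_mem hu) g₀⁻¹
            have h8 : g₀⁻¹ * (x⁻¹ * g₀ * x * g₀⁻¹)⁻¹ * g₀⁻¹⁻¹ = (g₀ * x)⁻¹ * (x * g₀) := by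
              group
            rwa [h8] at h7
    have hcommQ : ∀ a b : G ⧸ M, a * b = b * a := fun a b =>
      commutative_of_cyclic_center_quotient ψ hker a b
    show commutator G ≤ M
    rw [_root_.commutator_def]
    apply Subgroup.commutator_le.mpr
    intro g1 _ g2 _
    have hmk : ((⁅g1, g2⁆ : G) : G ⧸ M) = 1 := by
      rw [show ((⁅g1, g2⁆ : G) : G ⧸ M) = ⁅((g1 : G) : G ⧸ M), ((g2 : G) : G ⧸ M)⁆ from
        map_commutatorElement (QuotientGroup.mk' M) g1 g2]
      exact commutatorElement_eq_one_iff_commute.mpr (hcommQ _ _)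
    exact (QuotientGroup.eq_one_iff _).mp hmk
  have hMeq : M = Γ := le_antisymm hMΓ hΓM
  -- kernel of φ is the center
  have hkerφ : φ.ker = (Subgroup.center G).subgroupOf C := by
    ext c
    rw [MonoidHom.mem_ker, Subgroup.mem_subgroupOf]
    constructor
    · intro h
      have h1 : (c : G) * g₀ * (c : G)⁻¹ * g₀⁻¹ = 1 := h
      have hcg : Commute (c : G) g₀ := mul_inv_eq_iff_eq_mul.mp (mul_inv_eq_one.mp h1)
      rw [Subgroup.mem_center_iff]
      intro y
      have hKtop := hsup (Subgroup.centralizer {(c : G)}) ?_ ?_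
      · have hy : y ∈ Subgroup.centralizer {(c : G)} := by rw [hKtop]; trivial
        exact Subgroup.mem_centralizer_singleton_iff.mp hy
      · intro d hd
        rw [Subgroup.mem_centralizer_singleton_iff]
        exact hCcomm d hd (c : G) c.2
      · rw [Subgroup.mem_centralizer_singleton_iff]
        exact hcg.symm
    · intro h
      have h1 := Subgroup.mem_center_iff.mp h g₀
      show (c : G) * g₀ * (c : G)⁻¹ * g₀⁻¹ = 1
      rw [← h1]
      group
  -- conclude
  have hZC : Subgroup.center G ≤ C := Subgroup.center_le_centralizer _
  have hrel : (Subgroup.center G).relIndex C = p ^ 2 := by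
    have e1 : (↥C ⧸ φ.ker) ≃* φ.range := QuotientGroup.quotientKerEquivRange φ
    have e2 : Nat.card (↥C ⧸ φ.ker) = p ^ 2 := by
      rw [Nat.card_congr e1.toEquiv, ← hMdef, hMeq]
      exact hG'
    rw [Subgroup.relIndex, Subgroup.index_eq_card, ← hkerφ, e2]
  have := Subgroup.relIndex_mul_index hZC
  rw [hrel, hCidx] at this
  rw [← Subgroup.index_eq_card, ← this]
  ring
end

section
/- Let G be a finite group and p a prime such that gcd(p-1, |G|) = 1. Suppose |G'| = p^2, |G' ∩ Z(G)| = p, and the centralizer C_G(G') is non-abelian, and let s be the positive integer with p^{2s} = |C_G(G') : Z(C_G(G'))|. Then |G/Z(G)| = p^{2s+2} or |G/Z(G)| = p^{2s+3}. -/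
open scoped commutatorElement

lemma aux_le_center {G₁ : Type*} [Group G₁] [Finite G₁] {p : ℕ} (hp : p.Prime)
    (hgcd : Nat.gcd (p - 1) (Nat.card G₁) = 1)
    (K : Subgroup G₁) [K.Normal] (hK : Nat.card K = p) : K ≤ Subgroup.center G₁ := by
  haveI : Fact p.Prime := ⟨hp⟩
  haveI : IsCyclic ↥K := isCyclic_of_prime_card hK
  intro x hx
  rw [Subgroup.mem_center_iff]
  intro g
  have h1 : orderOf (MulAut.conjNormal (H := K) g) ∣ Nat.card G₁ :=
    (orderOf_map_dvd (MulAut.conjNormal (H := K)) g).trans (orderOf_dvd_natCard g)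
  have h2 : orderOf (MulAut.conjNormal (H := K) g) ∣ p - 1 := by
    have h := orderOf_dvd_natCard (MulAut.conjNormal (H := K) g)
    rwa [IsCyclic.card_mulAut, hK, Nat.totient_prime hp] at h
  have h4 : MulAut.conjNormal (H := K) g = 1 :=
    orderOf_eq_one_iff.mp (Nat.dvd_one.mp (hgcd ▸ Nat.dvd_gcd h2 h1))
  have h5 := congrArg (fun α : MulAut ↥K => ((α ⟨x, hx⟩ : ↥K) : G₁)) h4
  simp only [MulAut.conjNormal_apply, MulAut.one_apply] at h5
  calc g * x = g * x * g⁻¹ * g := by group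
  _ = x * g := by rw [h5]

lemma aux_key {G : Type*} [Group G] [Finite G] {p : ℕ} (hp : p.Prime)
    (hgcd : Nat.gcd (p - 1) (Nat.card G) = 1)
    (hG' : Nat.card ↥(commutator G) = p ^ 2)
    (hGZ : Nat.card ↥(commutator G ⊓ Subgroup.center G) = p) :
    ∀ (g x : G), x ∈ commutator G →
      x⁻¹ * (g * x * g⁻¹) ∈ commutator G ⊓ Subgroup.center G := by
  set N := commutator G ⊓ Subgroup.center G with hN
  haveI hNnorm : N.Normal := by
    constructor
    intro n hn g
    have hc : g * n = n * g := Subgroup.mem_center_iff.mp hn.2 g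
    have h : g * n * g⁻¹ = n := by rw [hc]; group
    rwa [h]
  let f : ↥(commutator G) →* G ⧸ N := (QuotientGroup.mk' N).comp (commutator G).subtype
  have hker : f.ker = N.subgroupOf (commutator G) := by
    ext x
    simp only [f, MonoidHom.mem_ker, MonoidHom.comp_apply,
      QuotientGroup.mk'_apply, QuotientGroup.eq_one_iff, Subgroup.mem_subgroupOf]
    rfl
  have hcardker : Nat.card f.ker = p := by
    rw [hker]
    rw [Nat.card_congr (Subgroup.subgroupOfEquivOfLe (inf_le_left (b := Subgroup.center G))).toEquiv]
    exact hGZ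
  have hcardquot : Nat.card (↥(commutator G) ⧸ f.ker) = p := by
    have h := Subgroup.card_eq_card_quotient_mul_card_subgroup f.ker
    rw [hG', hcardker, pow_two] at h
    exact (Nat.eq_of_mul_eq_mul_right hp.pos h.symm)
  have hcardrange : Nat.card f.range = p := by
    rw [← Nat.card_congr (QuotientGroup.quotientKerEquivRange f).toEquiv]
    exact hcardquot
  have hrangeeq : f.range = (commutator G).map (QuotientGroup.mk' N) := by
    rw [MonoidHom.range_comp, Subgroup.range_subtype]
  haveI : f.range.Normal := by
    rw [hrangeeq]
    exact Subgroup.Normal.map inferInstance _ (QuotientGroup.mk'_surjective N)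
  have hgcd' : Nat.gcd (p - 1) (Nat.card (G ⧸ N)) = 1 := by
    have hdvd : Nat.card (G ⧸ N) ∣ Nat.card G :=
      Dvd.intro _ (Subgroup.card_eq_card_quotient_mul_card_subgroup N).symm
    have h2 : Nat.gcd (p - 1) (Nat.card (G ⧸ N)) ∣ Nat.gcd (p - 1) (Nat.card G) :=
      Nat.dvd_gcd (Nat.gcd_dvd_left _ _) ((Nat.gcd_dvd_right _ _).trans hdvd)
    rw [hgcd] at h2
    exact Nat.dvd_one.mp h2
  have hcent : f.range ≤ Subgroup.center (G ⧸ N) := aux_le_center hp hgcd' f.range hcardrange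
  intro g x hx
  have hxr : f ⟨x, hx⟩ ∈ f.range := ⟨⟨x, hx⟩, rfl⟩
  have hcomm := Subgroup.mem_center_iff.mp (hcent hxr) (QuotientGroup.mk' N g)
  rw [← QuotientGroup.ker_mk' N, MonoidHom.mem_ker]
  have hfx : f ⟨x, hx⟩ = QuotientGroup.mk' N x := rfl
  rw [hfx] at hcomm
  rw [map_mul, map_mul, map_mul, map_inv, map_inv, hcomm]
  group

/-- Let `G` be a finite group and `p` a prime such that
`gcd (p-1, |G|) = 1`. Suppose `|G'| = p^2`, `|G' ∩ Z(G)| = p`, the centralizer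
`C_G(G')` is non-abelian, and let `s ≥ 1` with `p^(2s) = |C_G(G') : Z(C_G(G'))|`.
Then `|G/Z(G)| = p^(2s+2)` or `|G/Z(G)| = p^(2s+3)`. -/
theorem card_central_quotient_of_centralizer_commutator_nonabelian (G : Type*) [Group G]
    [Finite G] (p : ℕ) (hp : p.Prime)
    (hgcd : Nat.gcd (p - 1) (Nat.card G) = 1)
    (hG' : Nat.card ↥(commutator G) = p ^ 2)
    (hGZ : Nat.card ↥(commutator G ⊓ Subgroup.center G) = p)
    (hnab : ¬ ∀ x y : ↥(Subgroup.centralizer (commutator G : Set G)), x * y = y * x)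
    (s : ℕ) (hs : 0 < s)
    (hps : p ^ (2 * s) =
      (Subgroup.center ↥(Subgroup.centralizer (commutator G : Set G))).index) :
    Nat.card (G ⧸ Subgroup.center G) = p ^ (2 * s + 2) ∨
      Nat.card (G ⧸ Subgroup.center G) = p ^ (2 * s + 3) := by
  haveI : Fact p.Prime := ⟨hp⟩
  set N := commutator G ⊓ Subgroup.center G with hN
  set C := Subgroup.centralizer (commutator G : Set G) with hC
  have hcomm : ∀ a b : ↥(commutator G), a * b = b * a :=
    IsPGroup.commutative_of_card_eq_prime_sq hG'
  have hG'C : commutator G ≤ C := by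
    intro x hx
    rw [hC, Subgroup.mem_centralizer_iff]
    intro y hy
    exact congrArg Subtype.val (hcomm ⟨y, hy⟩ ⟨x, hx⟩)
  have hkey := aux_key hp hgcd hG' hGZ
  have hNle : N ≤ commutator G := inf_le_left
  have hpne : p ≠ p ^ 2 := by nlinarith [hp.two_le]
  have hnotle : ¬ commutator G ≤ N := by
    intro h
    have heq : N = commutator G := le_antisymm hNle h
    have h2 : Nat.card ↥N = p ^ 2 := by rw [heq]; exact hG'
    exact hpne (hGZ.symm.trans h2)
  obtain ⟨x₀, hx₀G', hx₀N⟩ := SetLike.not_le_iff_exists.mp hnotle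
  -- M = closure of {x₀} ∪ N equals commutator G
  set M := Subgroup.closure ({x₀} ∪ (N : Set G)) with hM
  have hMle : M ≤ commutator G := by
    rw [hM]
    apply (Subgroup.closure_le _).mpr
    exact Set.union_subset (Set.singleton_subset_iff.mpr hx₀G') (fun y hy => hNle hy)
  have hNleM : N ≤ M := fun y hy => Subgroup.subset_closure (Or.inr hy)
  have hx₀M : x₀ ∈ M := Subgroup.subset_closure (Or.inl rfl)
  have hcardM : Nat.card ↥M = p ^ 2 := by
    have hdvd : Nat.card ↥M ∣ p ^ 2 := hG' ▸ Subgroup.card_dvd_of_le hMle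
    obtain ⟨k, hk2, hkeq⟩ := (Nat.dvd_prime_pow hp).mp hdvd
    have hpd : p ∣ Nat.card ↥M := hGZ ▸ Subgroup.card_dvd_of_le hNleM
    have hk0 : k ≠ 0 := by
      intro h
      rw [h, pow_zero] at hkeq
      rw [hkeq] at hpd
      exact hp.ne_one (Nat.dvd_one.mp hpd)
    have hk1 : k ≠ 1 := by
      intro h
      rw [h, pow_one] at hkeq
      have heqNM : N = M := Subgroup.eq_of_le_of_card_ge hNleM (by rw [hkeq, hGZ])
      exact hx₀N (heqNM ▸ hx₀M)
    have : k = 2 := by omega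
    rw [hkeq, this]
  have hMeq : M = commutator G :=
    Subgroup.eq_of_le_of_card_ge hMle (by rw [hG', hcardM])
  -- elements commuting with x₀ centralize the commutator subgroup
  have hsing : ∀ g : G, x₀ * g = g * x₀ → g ∈ C := by
    intro g hg
    rw [hC, Subgroup.mem_centralizer_iff]
    intro y hy
    rw [← hMeq] at hy
    refine Subgroup.closure_induction (p := fun z _ => z * g = g * z) ?_ (by group) ?_ ?_ hy
    · rintro z (rfl | hz)
      · exact hg
      · exact (Subgroup.mem_center_iff.mp hz.2 g).symm
    · intro a b _ _ ha hb
      rw [mul_assoc, hb, ← mul_assoc, ha, mul_assoc]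
    · intro a _ ha
      calc a⁻¹ * g = a⁻¹ * g * a * a⁻¹ := by group
      _ = a⁻¹ * (a * g) * a⁻¹ := by rw [mul_assoc a⁻¹ g a, ← ha]
      _ = g * a⁻¹ := by group
  -- the homomorphism θ : G →* N with kernel C
  have hmemθ : ∀ g : G, x₀⁻¹ * (g * x₀ * g⁻¹) ∈ N := fun g => hkey g x₀ hx₀G'
  let θ : G →* ↥N :=
    { toFun := fun g => ⟨x₀⁻¹ * (g * x₀ * g⁻¹), hmemθ g⟩
      map_one' := by
        apply Subtype.ext
        show x₀⁻¹ * (1 * x₀ * 1⁻¹) = 1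
        group
      map_mul' := by
        intro g h
        apply Subtype.ext
        show x₀⁻¹ * (g * h * x₀ * (g * h)⁻¹) =
          (x₀⁻¹ * (g * x₀ * g⁻¹)) * (x₀⁻¹ * (h * x₀ * h⁻¹))
        have hc : g⁻¹ * (x₀⁻¹ * (h * x₀ * h⁻¹)) = (x₀⁻¹ * (h * x₀ * h⁻¹)) * g⁻¹ :=
          Subgroup.mem_center_iff.mp (hmemθ h).2 g⁻¹
        calc x₀⁻¹ * (g * h * x₀ * (g * h)⁻¹)
            = x₀⁻¹ * (g * (x₀ * (x₀⁻¹ * (h * x₀ * h⁻¹))) * g⁻¹) := by group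
        _ = x₀⁻¹ * (g * x₀ * ((x₀⁻¹ * (h * x₀ * h⁻¹)) * g⁻¹)) := by group
        _ = x₀⁻¹ * (g * x₀ * (g⁻¹ * (x₀⁻¹ * (h * x₀ * h⁻¹)))) := by rw [← hc]
        _ = (x₀⁻¹ * (g * x₀ * g⁻¹)) * (x₀⁻¹ * (h * x₀ * h⁻¹)) := by group }
  have hθval : ∀ g : G, (θ g : G) = x₀⁻¹ * (g * x₀ * g⁻¹) := fun g => rfl
  have hkerθ : θ.ker = C := by
    ext g
    rw [MonoidHom.mem_ker]
    constructor
    · intro h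
      have hval : x₀⁻¹ * (g * x₀ * g⁻¹) = 1 := congrArg Subtype.val h
      have h2 : g * x₀ * g⁻¹ = x₀ := by
        calc g * x₀ * g⁻¹ = x₀ * (x₀⁻¹ * (g * x₀ * g⁻¹)) := by group
        _ = x₀ := by rw [hval, mul_one]
      have h3 : x₀ * g = g * x₀ := by
        calc x₀ * g = (g * x₀ * g⁻¹) * g := by rw [h2]
        _ = g * x₀ := by group
      exact hsing g h3
    · intro hgC
      have hcx : x₀ * g = g * x₀ := Subgroup.mem_centralizer_iff.mp hgC x₀ hx₀G'
      apply Subtype.ext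
      show x₀⁻¹ * (g * x₀ * g⁻¹) = 1
      have h2 : g * x₀ * g⁻¹ = x₀ := by
        calc g * x₀ * g⁻¹ = (x₀ * g) * g⁻¹ := by rw [hcx]
        _ = x₀ := by group
      rw [h2]
      group
  have hCindex : C.index = p := by
    have h1 : C.index = Nat.card θ.range := by
      rw [← hkerθ, Subgroup.index_eq_card,
        Nat.card_congr (QuotientGroup.quotientKerEquivRange θ).toEquiv]
    have h3 : Nat.card θ.range ∣ p := hGZ ▸ Subgroup.card_subgroup_dvd_card θ.range
    have hdvd : C.index ∣ p := h1 ▸ h3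
    have hne : C.index ≠ 1 := by
      intro h
      have htop := Subgroup.index_eq_one.mp h
      have hle : commutator G ≤ Subgroup.center G := by
        intro x hx
        rw [Subgroup.mem_center_iff]
        intro g
        have hgC : g ∈ C := htop ▸ Subgroup.mem_top g
        exact (Subgroup.mem_centralizer_iff.mp hgC x hx).symm
      have heq : N = commutator G := le_antisymm hNle (le_inf le_rfl hle)
      have h2 : Nat.card ↥N = p ^ 2 := by rw [heq]; exact hG'
      exact hpne (hGZ.symm.trans h2)
    exact (hp.eq_one_or_self_of_dvd _ hdvd).resolve_left hne
  -- ZC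
  set ZC := (Subgroup.center ↥C).map C.subtype with hZC
  have hZCle : ZC ≤ C := Subgroup.map_subtype_le _
  have hcentralZC : ∀ x : G, x ∈ ZC → ∀ c ∈ C, c * x = x * c := by
    rintro x ⟨⟨x', hx'C⟩, hx'Z, rfl⟩ c hc
    exact congrArg Subtype.val (Subgroup.mem_center_iff.mp hx'Z ⟨c, hc⟩)
  have hZGle : Subgroup.center G ≤ ZC := by
    intro z hz
    have hzC : z ∈ C := by
      rw [hC, Subgroup.mem_centralizer_iff]
      exact fun h _ => Subgroup.mem_center_iff.mp hz h
    exact ⟨⟨z, hzC⟩,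
      Subgroup.mem_center_iff.mpr (fun c => Subtype.ext (Subgroup.mem_center_iff.mp hz c.val)),
      rfl⟩
  have hG'ZC : commutator G ≤ ZC := by
    intro x hx
    refine Subgroup.mem_map.mpr ⟨⟨x, hG'C hx⟩, Subgroup.mem_center_iff.mpr fun c =>
      Subtype.ext (Subgroup.mem_centralizer_iff.mp c.2 x hx).symm, rfl⟩
  have hrelZC : ZC.relIndex C = p ^ (2 * s) := by
    have hsub : ZC.subgroupOf C = Subgroup.center ↥C :=
      Subgroup.comap_map_eq_self_of_injective C.subtype_injective _
    rw [show ZC.relIndex C = (ZC.subgroupOf C).index from rfl, hsub, ← hps]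
  -- g₀ outside C, generating G over C
  have hCnetop : C ≠ ⊤ := by
    intro h
    rw [h, Subgroup.index_top] at hCindex
    exact hp.ne_one hCindex.symm
  obtain ⟨g₀, hg₀⟩ : ∃ g, g ∉ C := by
    by_contra h
    push_neg at h
    exact hCnetop ((Subgroup.eq_top_iff' C).mpr h)
  have htop : C ⊔ Subgroup.closure {g₀} = ⊤ := by
    have hCD : C ≤ C ⊔ Subgroup.closure {g₀} := le_sup_left
    have hdvd : (C ⊔ Subgroup.closure {g₀}).index ∣ p :=
      hCindex ▸ Subgroup.index_dvd_of_le hCD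
    rcases hp.eq_one_or_self_of_dvd _ hdvd with h1 | h1
    · exact Subgroup.index_eq_one.mp h1
    · exfalso
      have hrel : C.relIndex (C ⊔ Subgroup.closure {g₀}) * (C ⊔ Subgroup.closure {g₀}).index
          = C.index := Subgroup.relIndex_mul_index hCD
      rw [h1, hCindex] at hrel
      have hone : C.relIndex (C ⊔ Subgroup.closure {g₀}) = 1 :=
        Nat.eq_of_mul_eq_mul_right hp.pos (by rw [hrel, one_mul])
      have hDC : C ⊔ Subgroup.closure {g₀} ≤ C := Subgroup.relIndex_eq_one.mp hone
      exact hg₀ (hDC ((le_sup_right : Subgroup.closure {g₀} ≤ _)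
        (Subgroup.subset_closure rfl)))
  have hcentertop : ∀ a : G, (∀ c ∈ C, c * a = a * c) → g₀ * a = a * g₀ →
      a ∈ Subgroup.center G := by
    intro a h1 h2
    have hle : C ⊔ Subgroup.closure {g₀} ≤ Subgroup.centralizer {a} := by
      apply sup_le
      · intro c hc
        apply Subgroup.mem_centralizer_iff.mpr
        rintro y rfl
        exact (h1 c hc).symm
      · rw [Subgroup.closure_le]
        rintro y rfl
        exact Subgroup.mem_centralizer_iff.mpr (by rintro z rfl; exact h2.symm)
    rw [htop] at hle
    rw [Subgroup.mem_center_iff]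
    intro b
    exact (Subgroup.mem_centralizer_iff.mp (hle (Subgroup.mem_top b)) a rfl).symm
  -- φ : ZC →* commutator G
  have hmemφ : ∀ x : ↥ZC, ⁅(x : G), g₀⁆ ∈ commutator G := fun x => by
    rw [commutator_def]
    exact Subgroup.commutator_mem_commutator (Subgroup.mem_top _) (Subgroup.mem_top _)
  let φ : ↥ZC →* ↥(commutator G) :=
    { toFun := fun x => ⟨⁅(x : G), g₀⁆, hmemφ x⟩
      map_one' := by
        apply Subtype.ext
        show ⁅((1 : ↥ZC) : G), g₀⁆ = 1
        simp only [OneMemClass.coe_one, commutatorElement_def]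
        group
      map_mul' := by
        intro x y
        apply Subtype.ext
        have hyC : ⁅(y : G), g₀⁆ ∈ C := hG'C (hmemφ y)
        have hx : ⁅(y : G), g₀⁆ * (x : G) = (x : G) * ⁅(y : G), g₀⁆ :=
          hcentralZC (x : G) x.2 _ hyC
        have hcommG' := congrArg Subtype.val
          (hcomm ⟨⁅(y : G), g₀⁆, hmemφ y⟩ ⟨⁅(x : G), g₀⁆, hmemφ x⟩)
        show ⁅((x * y : ↥ZC) : G), g₀⁆ = ⁅(x : G), g₀⁆ * ⁅(y : G), g₀⁆
        push_cast
        calc ⁅(x : G) * (y : G), g₀⁆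
            = (x : G) * ⁅(y : G), g₀⁆ * (g₀ * (x : G)⁻¹ * g₀⁻¹) := by
              simp only [commutatorElement_def]; group
        _ = ⁅(y : G), g₀⁆ * (x : G) * (g₀ * (x : G)⁻¹ * g₀⁻¹) := by rw [← hx]
        _ = ⁅(y : G), g₀⁆ * ⁅(x : G), g₀⁆ := by
              simp only [commutatorElement_def]; group
        _ = ⁅(x : G), g₀⁆ * ⁅(y : G), g₀⁆ := hcommG' }
  have hkerφ : φ.ker = (Subgroup.center G).subgroupOf ZC := by
    ext x
    rw [MonoidHom.mem_ker, Subgroup.mem_subgroupOf]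
    constructor
    · intro h
      have hval : ⁅(x : G), g₀⁆ = 1 := congrArg Subtype.val h
      have hcg : (x : G) * g₀ = g₀ * (x : G) := commutatorElement_eq_one_iff_mul_comm.mp hval
      exact hcentertop _ (fun c hc => hcentralZC _ x.2 c hc) hcg.symm
    · intro h
      apply Subtype.ext
      show ⁅(x : G), g₀⁆ = 1
      rw [commutatorElement_eq_one_iff_mul_comm]
      exact (Subgroup.mem_center_iff.mp h g₀).symm
  have hrel2 : (Subgroup.center G).relIndex ZC = Nat.card φ.range := by
    rw [show (Subgroup.center G).relIndex ZC = ((Subgroup.center G).subgroupOf ZC).index from rfl,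
      ← hkerφ, Subgroup.index_eq_card,
      Nat.card_congr (QuotientGroup.quotientKerEquivRange φ).toEquiv]
  have hrdvd : Nat.card φ.range ∣ p ^ 2 := hG' ▸ Subgroup.card_subgroup_dvd_card φ.range
  have hrne1 : Nat.card φ.range ≠ 1 := by
    intro h
    have hbot : φ.range = ⊥ := Subgroup.card_eq_one.mp h
    have hmem : φ ⟨x₀, hG'ZC hx₀G'⟩ ∈ φ.range := ⟨⟨x₀, hG'ZC hx₀G'⟩, rfl⟩
    rw [hbot, Subgroup.mem_bot] at hmem
    have hval : ⁅x₀, g₀⁆ = 1 := congrArg Subtype.val hmem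
    have hx₀g₀ : x₀ * g₀ = g₀ * x₀ := commutatorElement_eq_one_iff_mul_comm.mp hval
    have hxc : x₀ ∈ Subgroup.center G :=
      hcentertop x₀ (fun c hc => hcentralZC x₀ (hG'ZC hx₀G') c hc) hx₀g₀.symm
    exact hx₀N ⟨hx₀G', hxc⟩
  obtain ⟨k, hk2, hkeq⟩ := (Nat.dvd_prime_pow hp).mp hrdvd
  have hk0 : k ≠ 0 := by
    intro h
    exact hrne1 (by rw [hkeq, h, pow_zero])
  have hindex1 : (Subgroup.center G).relIndex ZC * ZC.index = (Subgroup.center G).index :=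
    Subgroup.relIndex_mul_index hZGle
  have hindex2 : ZC.relIndex C * C.index = ZC.index :=
    Subgroup.relIndex_mul_index hZCle
  have hfinal : Nat.card (G ⧸ Subgroup.center G) = p ^ k * (p ^ (2 * s) * p) := by
    rw [← Subgroup.index_eq_card, ← hindex1, ← hindex2, hrelZC, hCindex, hrel2, hkeq]
  have hk12 : k = 1 ∨ k = 2 := by omega
  rcases hk12 with rfl | rfl
  · left
    rw [hfinal]
    ring
  · right
    rw [hfinal]
    ring
end

section
/- Let G be a finite group and p a prime such that gcd(p-1, |G|) = 1. Suppose |G'| = p^2 and |G' ∩ Z(G)| = p. Then the quotient group Q₁ = G/(G' ∩ Z(G)) satisfies |Q₁ : Z(Q₁)| = p^2, and the quotient group Q₂ = G/Z(G) satisfies |Q₂ : Z(Q₂)| = p^2. -/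
open scoped commutatorElement

section Aux
variable {G : Type*} [Group G]

private lemma absorb_left (c x y : G) (hc : c ∈ Subgroup.center G) :
    ⁅c * x, y⁆ = ⁅x, y⁆ := by
  have h' := Subgroup.mem_center_iff.mp ((Subgroup.center G).inv_mem hc)
  calc ⁅c * x, y⁆ = c * ((x * y * x⁻¹) * c⁻¹) * y⁻¹ := by group
    _ = c * (c⁻¹ * (x * y * x⁻¹)) * y⁻¹ := by rw [h' (x * y * x⁻¹)]
    _ = ⁅x, y⁆ := by group

private lemma absorb_right (x d y : G) (hd : d ∈ Subgroup.center G) :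
    ⁅x, d * y⁆ = ⁅x, y⁆ := by
  have h := Subgroup.mem_center_iff.mp hd
  calc ⁅x, d * y⁆ = (x * d) * (y * x⁻¹ * y⁻¹) * d⁻¹ := by group
    _ = (d * x) * (y * x⁻¹ * y⁻¹) * d⁻¹ := by rw [h x]
    _ = d * ⁅x, y⁆ * d⁻¹ := by group
    _ = (⁅x, y⁆ * d) * d⁻¹ := by rw [h ⁅x, y⁆]
    _ = ⁅x, y⁆ := by group

private lemma commute_commutator (z x y : G) (hx : ⁅z, x⁆ ∈ Subgroup.center G)
    (hy : ⁅z, y⁆ ∈ Subgroup.center G) : Commute z ⁅x, y⁆ := by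
  have key : z * ⁅x, y⁆ * z⁻¹ = ⁅x, y⁆ := by
    have h1 : z * x * z⁻¹ = ⁅z, x⁆ * x := by group
    have h2 : z * y * z⁻¹ = ⁅z, y⁆ * y := by group
    rw [conjugate_commutatorElement, h1, h2, absorb_left _ _ _ hx, absorb_right _ _ _ hy]
  have : z * ⁅x, y⁆ = ⁅x, y⁆ * z := by
    conv_rhs => rw [← key]
    group
  exact this

private lemma comm_mul_right (a x y : G) (h : ∀ g h : G, ⁅g, h⁆ ∈ Subgroup.center G) :
    ⁅x * y, a⁆ = ⁅x, a⁆ * ⁅y, a⁆ := by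
  have h1 := Subgroup.mem_center_iff.mp (h y a)
  calc ⁅x * y, a⁆ = x * ⁅y, a⁆ * x⁻¹ * ⁅x, a⁆ := by group
    _ = (⁅y, a⁆ * x) * x⁻¹ * ⁅x, a⁆ := by rw [← h1 x]
    _ = ⁅y, a⁆ * ⁅x, a⁆ := by group
    _ = ⁅x, a⁆ * ⁅y, a⁆ := by rw [h1 ⁅x, a⁆]

private lemma comm_mul_left (a x y : G) (h : ∀ g h : G, ⁅g, h⁆ ∈ Subgroup.center G) :
    ⁅a, x * y⁆ = ⁅a, x⁆ * ⁅a, y⁆ := by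
  have h1 := Subgroup.mem_center_iff.mp (h a y)
  calc ⁅a, x * y⁆ = ⁅a, x⁆ * (x * ⁅a, y⁆ * x⁻¹) := by group
    _ = ⁅a, x⁆ * (⁅a, y⁆ * x * x⁻¹) := by rw [← h1 x]
    _ = ⁅a, x⁆ * ⁅a, y⁆ := by group

/-- A normal subgroup of prime order `p` with `gcd (p-1) |G| = 1` is central. -/
private lemma normal_prime_central [Finite G] (S : Subgroup G) [S.Normal] (p : ℕ)
    (hp : p.Prime) (hS : Nat.card S = p)
    (hgcd : Nat.gcd (p - 1) (Nat.card G) = 1) : S ≤ Subgroup.center G := by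
  haveI : Fact p.Prime := ⟨hp⟩
  haveI : IsCyclic S := isCyclic_of_prime_card hS
  have hAut : Nat.card (MulAut S) = p - 1 := by
    rw [IsCyclic.card_mulAut, hS, Nat.totient_prime hp]
  intro s hs
  rw [Subgroup.mem_center_iff]
  intro g
  have h1 : orderOf (MulAut.conjNormal (H := S) g) ∣ p - 1 := by
    rw [← hAut]; exact orderOf_dvd_natCard _
  have h2 : orderOf (MulAut.conjNormal (H := S) g) ∣ Nat.card G :=
    (orderOf_map_dvd _ g).trans (orderOf_dvd_natCard g)
  have h3 : orderOf (MulAut.conjNormal (H := S) g) = 1 := by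
    have := Nat.dvd_gcd h1 h2
    rw [hgcd] at this
    exact Nat.dvd_one.mp this
  have h4 : MulAut.conjNormal (H := S) g = 1 := orderOf_eq_one_iff.mp h3
  have h5 : g * s * g⁻¹ = s := by
    have := congrArg (fun (α : MulAut S) => ((α ⟨s, hs⟩ : S) : G)) h4
    simpa [MulAut.conjNormal_apply] using this
  calc g * s = (g * s * g⁻¹) * g := by group
    _ = s * g := by rw [h5]

end Aux


/-- Let `G` be a finite group and `p` a prime such that
`gcd (p-1, |G|) = 1`. Suppose `|G'| = p^2` and `|G' ∩ Z(G)| = p`. Then the quotient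
`Q₁ = G/(G' ∩ Z(G))` satisfies `|Q₁ : Z(Q₁)| = p^2`, and the quotient `Q₂ = G/Z(G)`
satisfies `|Q₂ : Z(Q₂)| = p^2`. -/
theorem index_center_of_quotients (G : Type*) [Group G] [Finite G]
    (p : ℕ) (hp : p.Prime)
    (hgcd : Nat.gcd (p - 1) (Nat.card G) = 1)
    (hG' : Nat.card ↥(commutator G) = p ^ 2)
    (hGZ : Nat.card ↥(commutator G ⊓ Subgroup.center G) = p) :
    (Subgroup.center (G ⧸ (commutator G ⊓ Subgroup.center G))).index = p ^ 2 ∧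
      (Subgroup.center (G ⧸ Subgroup.center G)).index = p ^ 2 := by
  classical
  set N : Subgroup G := commutator G ⊓ Subgroup.center G with hNdef
  have hp1 : 1 < p := hp.one_lt
  have hNle : N ≤ commutator G := inf_le_left
  have hNleZ : N ≤ Subgroup.center G := inf_le_right
  haveI hNnorm : N.Normal := by
    constructor
    intro n hn g
    have h := Subgroup.mem_center_iff.mp (hNleZ hn)
    have heq : g * n * g⁻¹ = n := by rw [h g]; group
    rwa [heq]
  set π : G →* G ⧸ N := QuotientGroup.mk' N with hπdef
  have hπs : Function.Surjective π := QuotientGroup.mk'_surjective N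
  have hker : π.ker = N := QuotientGroup.ker_mk' N
  have hmemN : ∀ w : G, π w = 1 ↔ w ∈ N := fun w => QuotientGroup.eq_one_iff w
  have hcomm_mem : ∀ x g : G, (⁅π x, π g⁆ = 1) ↔ ⁅x, g⁆ ∈ N := by
    intro x g
    rw [← map_commutatorElement]
    exact hmemN _
  -- the commutator subgroup of the quotient and its cardinality
  have hmapcomm : Subgroup.map π (commutator G) = commutator (G ⧸ N) := by
    rw [commutator, commutator, Subgroup.map_commutator,
      Subgroup.map_top_of_surjective π hπs]
  have hcardS : Nat.card (commutator (G ⧸ N)) = p := by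
    rw [← hmapcomm]
    set f : ↥(commutator G) →* G ⧸ N := π.comp (commutator G).subtype with hf
    have hrange : f.range = Subgroup.map π (commutator G) := by
      rw [hf, MonoidHom.range_comp, Subgroup.range_subtype]
    have hkerf : f.ker = N.subgroupOf (commutator G) := by
      ext x
      rw [MonoidHom.mem_ker, Subgroup.mem_subgroupOf]
      show π (x : G) = 1 ↔ _
      exact hmemN _
    have hcard1 : Nat.card f.ker = p := by
      rw [hkerf, ← hGZ]
      exact Nat.card_congr (Subgroup.subgroupOfEquivOfLe hNle).toEquiv
    have hcard2 : Nat.card ↥(commutator G) = Nat.card f.range * Nat.card f.ker := by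
      rw [← Nat.card_congr (QuotientGroup.quotientKerEquivRange f).toEquiv]
      exact Subgroup.card_eq_card_quotient_mul_card_subgroup f.ker
    rw [hG', hcard1] at hcard2
    have : Nat.card f.range = p := by
      have hsq : p * p = Nat.card f.range * p := by rw [← hcard2]; ring
      exact (Nat.eq_of_mul_eq_mul_right hp.pos hsq.symm)
    rw [← hrange, this]
  haveI : (commutator (G ⧸ N)).Normal := Subgroup.commutator_normal ⊤ ⊤
  have hSle : commutator (G ⧸ N) ≤ Subgroup.center (G ⧸ N) := by
    apply normal_prime_central _ p hp hcardS
    have hdvd : Nat.card (G ⧸ N) ∣ Nat.card G := Subgroup.card_quotient_dvd_card N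
    have h1 : Nat.gcd (p - 1) (Nat.card (G ⧸ N)) ∣ Nat.gcd (p - 1) (Nat.card G) :=
      Nat.dvd_gcd (Nat.gcd_dvd_left _ _) ((Nat.gcd_dvd_right _ _).trans hdvd)
    rw [hgcd] at h1
    exact Nat.dvd_one.mp h1
  have hcentral : ∀ a b : G ⧸ N, ⁅a, b⁆ ∈ Subgroup.center (G ⧸ N) :=
    fun a b => hSle (Subgroup.commutator_mem_commutator (Subgroup.mem_top a) (Subgroup.mem_top b))
  -- membership in comap of center
  have hZmem : ∀ x : G, (π x ∈ Subgroup.center (G ⧸ N)) ↔ ∀ g : G, ⁅x, g⁆ ∈ N := by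
    intro x
    constructor
    · intro hx g
      rw [← hcomm_mem]
      exact commutatorElement_eq_one_iff_mul_comm.mpr
        ((Subgroup.mem_center_iff.mp hx (π g)).symm)
    · intro hx
      rw [Subgroup.mem_center_iff]
      intro q
      obtain ⟨g, rfl⟩ := hπs q
      exact (commutatorElement_eq_one_iff_mul_comm.mp ((hcomm_mem x g).mpr (hx g))).symm
  -- the commutator subgroup is not central
  have hnotle : ¬ (commutator G ≤ N) := by
    intro hle
    have hd := Subgroup.card_dvd_of_le hle
    rw [hG', hGZ] at hd
    have hle2 := Nat.le_of_dvd hp.pos hd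
    nlinarith
  have hNneq : ¬ commutator G ≤ Subgroup.center G := by
    intro hle
    exact hnotle (le_inf le_rfl hle)
  obtain ⟨u₀, hu₀G', hu₀nc⟩ : ∃ u, u ∈ commutator G ∧ u ∉ Subgroup.center G := by
    by_contra h
    push_neg at h
    exact hNneq h
  obtain ⟨z, hz⟩ : ∃ z, ¬ (z * u₀ = u₀ * z) := by
    by_contra h
    push_neg at h
    exact hu₀nc (Subgroup.mem_center_iff.mpr h)
  set Z2 : Subgroup G := Subgroup.comap π (Subgroup.center (G ⧸ N)) with hZ2def
  set Hc : Subgroup G := Subgroup.comap π (Subgroup.centralizer {π z}) with hHdef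
  have hmemH : ∀ x : G, x ∈ Hc ↔ ⁅z, x⁆ ∈ N := by
    intro x
    constructor
    · intro hx
      rw [← hcomm_mem]
      exact commutatorElement_eq_one_iff_mul_comm.mpr
        (Subgroup.mem_centralizer_iff.mp (Subgroup.mem_comap.mp hx) _ rfl)
    · intro hx
      refine Subgroup.mem_comap.mpr (Subgroup.mem_centralizer_iff.mpr ?_)
      rintro h hh
      rw [Set.mem_singleton_iff] at hh
      subst hh
      exact commutatorElement_eq_one_iff_mul_comm.mp ((hcomm_mem z x).mpr hx)
  -- Claim C : commutators of elements of Hc lie in N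
  have claimC : ∀ x ∈ Hc, ∀ y ∈ Hc, ⁅x, y⁆ ∈ N := by
    intro x hx y hy
    by_contra hxy
    have hwG' : ⁅x, y⁆ ∈ commutator G :=
      Subgroup.commutator_mem_commutator (Subgroup.mem_top x) (Subgroup.mem_top y)
    set P : Subgroup G := Subgroup.closure (insert ⁅x, y⁆ (N : Set G)) with hP
    have hNP : N ≤ P := fun n hn => Subgroup.subset_closure (Set.mem_insert_of_mem _ hn)
    have hwP : ⁅x, y⁆ ∈ P := Subgroup.subset_closure (Set.mem_insert _ _)
    have hPle : P ≤ commutator G := by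
      rw [hP]
      apply (Subgroup.closure_le _).mpr
      rintro v hv
      rcases Set.mem_insert_iff.mp hv with rfl | hv
      · exact hwG'
      · exact hNle hv
    have hcardP_dvd : Nat.card P ∣ p ^ 2 := hG' ▸ Subgroup.card_dvd_of_le hPle
    have hpdvd : p ∣ Nat.card P := hGZ ▸ Subgroup.card_dvd_of_le hNP
    have hcardP : Nat.card P = p ^ 2 := by
      obtain ⟨i, hi2, hieq⟩ := (Nat.dvd_prime_pow hp).mp hcardP_dvd
      have hi : i = 0 ∨ i = 1 ∨ i = 2 := by omega
      rcases hi with rfl | rfl | rfl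
      · rw [pow_zero] at hieq
        rw [hieq] at hpdvd
        exact absurd (Nat.dvd_one.mp hpdvd) (by omega)
      · exfalso
        rw [pow_one] at hieq
        have heq : N = P := Subgroup.eq_of_le_of_card_ge hNP (by rw [hieq, hGZ])
        exact hxy (heq ▸ hwP)
      · exact hieq
    have hPG' : P = commutator G := Subgroup.eq_of_le_of_card_ge hPle (by rw [hG', hcardP])
    have hPcent : P ≤ Subgroup.centralizer {z} := by
      rw [hP]
      apply (Subgroup.closure_le _).mpr
      rintro v hv
      rcases Set.mem_insert_iff.mp hv with rfl | hv
      · apply Subgroup.mem_centralizer_iff.mpr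
        rintro h hh
        rw [Set.mem_singleton_iff] at hh
        rw [hh]
        exact commute_commutator z x y (hNleZ ((hmemH x).mp hx)) (hNleZ ((hmemH y).mp hy))
      · apply Subgroup.mem_centralizer_iff.mpr
        rintro h hh
        rw [Set.mem_singleton_iff] at hh
        rw [hh]
        exact Subgroup.mem_center_iff.mp (hNleZ hv) z
    have hcu : Commute z u₀ := Subgroup.mem_centralizer_iff.mp (hPcent (hPG' ▸ hu₀G')) z rfl
    exact hz hcu
  -- homomorphisms q ↦ ⁅a, q⁆ on the quotient
  let lhom : (G ⧸ N) → ((G ⧸ N) →* (G ⧸ N)) := fun a =>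
    MonoidHom.mk' (fun x => ⁅a, x⁆) (fun x y => comm_mul_left a x y hcentral)
  -- index of Hc is p
  have hHindex_dvd : Hc.index ∣ p := by
    have h1 : Hc.index = (Subgroup.centralizer {π z}).index :=
      (Subgroup.centralizer {π z}).index_comap_of_surjective hπs
    have h2 : Subgroup.centralizer {π z} = (lhom (π z)).ker := by
      ext x
      rw [MonoidHom.mem_ker]
      constructor
      · intro hx
        exact commutatorElement_eq_one_iff_mul_comm.mpr
          (Subgroup.mem_centralizer_iff.mp hx _ rfl)
      · intro hx
        apply Subgroup.mem_centralizer_iff.mpr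
        rintro h hh
        rw [Set.mem_singleton_iff] at hh
        subst hh
        exact commutatorElement_eq_one_iff_mul_comm.mp hx
    have h3 : (lhom (π z)).ker.index = Nat.card (lhom (π z)).range :=
      Subgroup.index_ker _
    have h4 : (lhom (π z)).range ≤ commutator (G ⧸ N) := by
      rintro q ⟨x, rfl⟩
      exact Subgroup.commutator_mem_commutator (Subgroup.mem_top _) (Subgroup.mem_top _)
    rw [h1, h2, h3]
    exact hcardS ▸ Subgroup.card_dvd_of_le h4
  have hHne : Hc ≠ ⊤ := by
    intro htop
    apply hnotle
    rw [commutator]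
    apply Subgroup.commutator_le.mpr
    intro g1 _ g2 _
    exact claimC g1 (htop ▸ Subgroup.mem_top g1) g2 (htop ▸ Subgroup.mem_top g2)
  have hHindex : Hc.index = p := by
    rcases hp.eq_one_or_self_of_dvd _ hHindex_dvd with h | h
    · exact absurd (Subgroup.index_eq_one.mp h) hHne
    · exact h
  have hNZ2 : N ≤ Z2 := by
    intro n hn
    apply Subgroup.mem_comap.mpr
    rw [hZmem]
    intro g
    have h1 : ⁅n, g⁆ = 1 :=
      commutatorElement_eq_one_iff_mul_comm.mpr
        ((Subgroup.mem_center_iff.mp (hNleZ hn) g).symm)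
    rw [h1]
    exact N.one_mem
  have hZ2H : Z2 ≤ Hc := Subgroup.comap_mono (Subgroup.center_le_centralizer _)
  obtain ⟨t, ht⟩ : ∃ t, t ∉ Hc := by
    by_contra h
    push_neg at h
    exact hHne ((Subgroup.eq_top_iff' Hc).mpr h)
  -- key step : x ∈ Hc with ⁅x,t⁆ ∈ N implies x ∈ Z2
  have hker_to_Z2 : ∀ x : G, x ∈ Hc → ⁅x, t⁆ ∈ N → x ∈ Z2 := by
    intro x hx hxt
    apply Subgroup.mem_comap.mpr
    rw [hZmem]
    intro g
    set M : Subgroup (G ⧸ N) := (Subgroup.map π Hc) ⊔ (Subgroup.closure {π t}) with hM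
    have hMker : M ≤ (lhom (π x)).ker := by
      apply sup_le
      · rintro q ⟨g', hg', rfl⟩
        rw [MonoidHom.mem_ker]
        show ⁅π x, π g'⁆ = 1
        exact (hcomm_mem x g').mpr (claimC x hx g' hg')
      · apply (Subgroup.closure_le _).mpr
        rintro q hq
        rw [Set.mem_singleton_iff] at hq
        subst hq
        rw [SetLike.mem_coe, MonoidHom.mem_ker]
        show ⁅π x, π t⁆ = 1
        exact (hcomm_mem x t).mpr hxt
    have hMtop : M = ⊤ := by
      have hkerle : π.ker ≤ Hc := by rw [hker]; exact hNZ2.trans hZ2H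
      have hmapindex : (Subgroup.map π Hc).index = p := by
        rw [Hc.index_map_eq hπs hkerle, hHindex]
      have hMdvd : M.index ∣ p :=
        hmapindex ▸ Subgroup.index_dvd_of_le le_sup_left
      rcases hp.eq_one_or_self_of_dvd _ hMdvd with h | h
      · exact Subgroup.index_eq_one.mp h
      · exfalso
        have hrel : (Subgroup.map π Hc).relIndex M * M.index = (Subgroup.map π Hc).index :=
          Subgroup.relIndex_mul_index le_sup_left
        rw [h, hmapindex] at hrel
        have hrel1 : (Subgroup.map π Hc).relIndex M = 1 := by
          have h' : (Subgroup.map π Hc).relIndex M * p = 1 * p := by rw [hrel, one_mul]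
          exact Nat.eq_of_mul_eq_mul_right hp.pos h'
        have hMle : M ≤ Subgroup.map π Hc := Subgroup.relIndex_eq_one.mp hrel1
        have hπt : π t ∈ Subgroup.map π Hc :=
          hMle (Subgroup.mem_sup_right (Subgroup.subset_closure rfl))
        obtain ⟨h', hh', heq⟩ := hπt
        have hn : (h')⁻¹ * t ∈ N := by
          apply (hmemN _).mp
          rw [map_mul, map_inv, heq]
          group
        have htmem : t = h' * ((h')⁻¹ * t) := by group
        exact ht (htmem ▸ Hc.mul_mem hh' ((hNZ2.trans hZ2H) hn))
    have hq : π g ∈ M := by rw [hMtop]; exact Subgroup.mem_top _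
    have hq2 := hMker hq
    rw [MonoidHom.mem_ker] at hq2
    exact (hcomm_mem x g).mp hq2
  -- relative index of Z2 in Hc divides p
  have hrelindex_dvd : Z2.relIndex Hc ∣ p := by
    let χ : ↥Hc →* (G ⧸ N) := MonoidHom.mk' (fun x => ⁅π (x : G), π t⁆)
      (fun x y => by
        show ⁅π ((x : G) * (y : G)), π t⁆ = ⁅π (x : G), π t⁆ * ⁅π (y : G), π t⁆
        rw [map_mul]
        exact comm_mul_right (π t) (π x) (π y) hcentral)
    have hkerχ : χ.ker = Z2.subgroupOf Hc := by
      ext x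
      rw [MonoidHom.mem_ker, Subgroup.mem_subgroupOf]
      constructor
      · intro hx
        exact hker_to_Z2 x x.2 ((hcomm_mem _ t).mp hx)
      · intro hx
        show ⁅π (x : G), π t⁆ = 1
        apply (hcomm_mem _ t).mpr
        exact (hZmem _).mp (Subgroup.mem_comap.mp hx) t
    have hrangeχ : χ.range ≤ commutator (G ⧸ N) := by
      rintro q ⟨x, rfl⟩
      exact Subgroup.commutator_mem_commutator (Subgroup.mem_top _) (Subgroup.mem_top _)
    have hre : Z2.relIndex Hc = (Z2.subgroupOf Hc).index := rfl
    rw [hre, ← hkerχ, Subgroup.index_ker]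
    exact hcardS ▸ Subgroup.card_dvd_of_le hrangeχ
  have hZ2index : Z2.relIndex Hc * Hc.index = Z2.index :=
    Subgroup.relIndex_mul_index hZ2H
  have hZ2dvd : Z2.index ∣ p ^ 2 := by
    rw [← hZ2index, sq]
    exact mul_dvd_mul hrelindex_dvd (hHindex ▸ dvd_refl p)
  have hZ2eq : Z2.index = p ^ 2 := by
    obtain ⟨i, hi2, hieq⟩ := (Nat.dvd_prime_pow hp).mp hZ2dvd
    have hi : i = 0 ∨ i = 1 ∨ i = 2 := by omega
    rcases hi with rfl | rfl | rfl
    · exfalso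
      rw [pow_zero] at hieq
      have hZt : Z2 = ⊤ := Subgroup.index_eq_one.mp hieq
      apply hnotle
      rw [commutator]
      apply Subgroup.commutator_le.mpr
      intro g1 _ g2 _
      have hg1 : g1 ∈ Z2 := hZt ▸ Subgroup.mem_top g1
      exact (hZmem g1).mp (Subgroup.mem_comap.mp hg1) g2
    · exfalso
      rw [pow_one] at hieq
      have hc1 : (Subgroup.center (G ⧸ N)).index = p := by
        rw [← (Subgroup.center (G ⧸ N)).index_comap_of_surjective hπs]
        exact hieq
      haveI : Fact p.Prime := ⟨hp⟩
      have hcard_q : Nat.card ((G ⧸ N) ⧸ Subgroup.center (G ⧸ N)) = p := by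
        rw [← Subgroup.index_eq_card]
        exact hc1
      haveI := isCyclic_of_prime_card hcard_q
      have hcommutative := commutative_of_cyclic_center_quotient
        (QuotientGroup.mk' (Subgroup.center (G ⧸ N)))
        (le_of_eq (QuotientGroup.ker_mk' _))
      apply hnotle
      rw [commutator]
      apply Subgroup.commutator_le.mpr
      intro g1 _ g2 _
      apply (hcomm_mem g1 g2).mp
      rw [commutatorElement_eq_one_iff_mul_comm]
      exact hcommutative _ _
    · exact hieq
  constructor
  · rw [← (Subgroup.center (G ⧸ N)).index_comap_of_surjective hπs]
    exact hZ2eq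
  · set ρ : G →* G ⧸ Subgroup.center G := QuotientGroup.mk' (Subgroup.center G) with hρdef
    have hρs : Function.Surjective ρ := QuotientGroup.mk'_surjective _
    have hρker : ρ.ker = Subgroup.center G := QuotientGroup.ker_mk' _
    have hcomap : Subgroup.comap ρ (Subgroup.center (G ⧸ Subgroup.center G)) = Z2 := by
      ext x
      rw [Subgroup.mem_comap]
      constructor
      · intro hx
        apply Subgroup.mem_comap.mpr
        rw [hZmem]
        intro g
        have h2 : ⁅ρ x, ρ g⁆ = 1 :=
          commutatorElement_eq_one_iff_mul_comm.mpr
            ((Subgroup.mem_center_iff.mp hx (ρ g)).symm)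
        rw [← map_commutatorElement] at h2
        have h1 : ⁅x, g⁆ ∈ Subgroup.center G := by
          rw [← hρker, MonoidHom.mem_ker]
          exact h2
        rw [hNdef, Subgroup.mem_inf]
        exact ⟨Subgroup.commutator_mem_commutator (Subgroup.mem_top x) (Subgroup.mem_top g), h1⟩
      · intro hx
        have hx' := (hZmem x).mp (Subgroup.mem_comap.mp hx)
        rw [Subgroup.mem_center_iff]
        intro q
        obtain ⟨g, rfl⟩ := hρs q
        have h1 : ⁅x, g⁆ ∈ Subgroup.center G := hNleZ (hx' g)
        have h2 : ρ ⁅x, g⁆ = 1 := by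
          rw [← MonoidHom.mem_ker, hρker]
          exact h1
        rw [map_commutatorElement] at h2
        exact (commutatorElement_eq_one_iff_mul_comm.mp h2).symm
    rw [← (Subgroup.center (G ⧸ Subgroup.center G)).index_comap_of_surjective hρs, hcomap]
    exact hZ2eq
end

section
/- Let G be a finite group and p a prime such that gcd(p-1, |G|) = 1. If |G'| = p^2 and |G' ∩ Z(G)| = p, then G is nilpotent of class 3; in particular, G is isomorphic to a direct product P × A, where A is an abelian group and P is a p-group with |P'| = p^2 and |P' ∩ Z(P)| = p. -/
open Subgroup
open scoped commutatorElement

private lemma comm_central {G : Type*} [Group G] {a b : G} (x y : G)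
    (ha : ∀ g : G, g * a = a * g) (hb : ∀ g : G, g * b = b * g) :
    ⁅x * a, y * b⁆ = ⁅x, y⁆ := by
  have ha' : ∀ g : G, a * g * a⁻¹ = g := fun g => by
    rw [← ha g, mul_assoc, mul_inv_cancel, mul_one]
  have hconj : ∀ z : G, (x * a) * z * (x * a)⁻¹ = x * z * x⁻¹ := fun z => by
    rw [mul_inv_rev]
    calc x * a * z * (a⁻¹ * x⁻¹) = x * (a * z * a⁻¹) * x⁻¹ := by group
    _ = x * z * x⁻¹ := by rw [ha']
  calc ⁅x * a, y * b⁆ = ((x*a) * (y*b) * (x*a)⁻¹) * (y*b)⁻¹ := by group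
    _ = (x * (y*b) * x⁻¹) * (b⁻¹ * y⁻¹) := by rw [hconj, mul_inv_rev]
    _ = x * y * (b * x⁻¹) * (b⁻¹ * y⁻¹) := by group
    _ = x * y * (x⁻¹ * b) * (b⁻¹ * y⁻¹) := by rw [← hb x⁻¹]
    _ = ⁅x, y⁆ := by group

private lemma key_le {G : Type*} [Group G] [Finite G] {p : ℕ} (hp : p.Prime)
    (hgcd : Nat.gcd (p - 1) (Nat.card G) = 1)
    (hG' : Nat.card ↥(commutator G) = p ^ 2)
    (hGZ : Nat.card ↥(commutator G ⊓ Subgroup.center G) = p) :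
    ∀ x ∈ commutator G, ∀ g : G, ⁅x, g⁆ ∈ commutator G ⊓ Subgroup.center G := by
  haveI : Fact p.Prime := ⟨hp⟩
  haveI hNnorm : (commutator G ⊓ Subgroup.center G).Normal := by
    constructor
    intro n hn g
    have hz : g * n = n * g := Subgroup.mem_center_iff.mp hn.2 g
    have heq : g * n * g⁻¹ = n := by rw [hz, mul_assoc, mul_inv_cancel, mul_one]
    rw [heq]; exact hn
  haveI : ((commutator G ⊓ Subgroup.center G).subgroupOf (commutator G)).Normal :=
    hNnorm.subgroupOf (commutator G)
  have hmap : ∀ g : G,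
      ((commutator G ⊓ Subgroup.center G).subgroupOf (commutator G)).map
        (MulAut.conjNormal g : commutator G ≃* commutator G).toMonoidHom =
      (commutator G ⊓ Subgroup.center G).subgroupOf (commutator G) := by
    intro g
    apply le_antisymm
    · rintro _ ⟨n, hn, rfl⟩
      simp only [SetLike.mem_coe, Subgroup.mem_subgroupOf] at hn ⊢
      rw [MulEquiv.coe_toMonoidHom, MulAut.conjNormal_apply]
      exact hNnorm.conj_mem _ hn g
    · intro x hx
      simp only [SetLike.mem_coe, Subgroup.mem_subgroupOf] at hx
      refine ⟨(MulAut.conjNormal g)⁻¹ x, ?_, by simp⟩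
      simp only [SetLike.mem_coe, Subgroup.mem_subgroupOf]
      have : (((MulAut.conjNormal g)⁻¹ x : commutator G) : G) = g⁻¹ * x * g⁻¹⁻¹ := by
        rw [← map_inv (MulAut.conjNormal (G := G))]
        exact MulAut.conjNormal_apply g⁻¹ x
      rw [this, inv_inv]
      simpa using hNnorm.conj_mem _ hx g⁻¹
  let φ : G →* MulAut (commutator G ⧸
      (commutator G ⊓ Subgroup.center G).subgroupOf (commutator G)) :=
    { toFun := fun g => QuotientGroup.congr _ _ (MulAut.conjNormal g) (hmap g)
      map_one' := by
        ext q
        induction q using QuotientGroup.induction_on with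
        | H x => simp [QuotientGroup.congr_mk]
      map_mul' := fun g h => by
        ext q
        induction q using QuotientGroup.induction_on with
        | H x => simp [QuotientGroup.congr_mk]; rfl }
  have hNKcard : Nat.card ((commutator G ⊓ Subgroup.center G).subgroupOf (commutator G)) = p := by
    rw [Nat.card_congr (Subgroup.subgroupOfEquivOfLe inf_le_left).toEquiv]; exact hGZ
  have hQcard : Nat.card (commutator G ⧸
      (commutator G ⊓ Subgroup.center G).subgroupOf (commutator G)) = p := by
    have := Subgroup.card_eq_card_quotient_mul_card_subgroup
      ((commutator G ⊓ Subgroup.center G).subgroupOf (commutator G))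
    rw [hG', hNKcard, pow_two] at this
    exact (Nat.eq_of_mul_eq_mul_right hp.pos this.symm)
  haveI := isCyclic_of_prime_card hQcard
  haveI : Finite (MulAut (commutator G ⧸
      (commutator G ⊓ Subgroup.center G).subgroupOf (commutator G))) :=
    Finite.of_injective (fun e => (e : _ → _)) DFunLike.coe_injective
  have hAut : Nat.card (MulAut (commutator G ⧸
      (commutator G ⊓ Subgroup.center G).subgroupOf (commutator G))) = p - 1 := by
    rw [IsCyclic.card_mulAut, hQcard, Nat.totient_prime hp]
  have hdvd1 : Nat.card φ.range ∣ p - 1 := hAut ▸ Subgroup.card_subgroup_dvd_card φ.range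
  have hdvd2 : Nat.card φ.range ∣ Nat.card G :=
    Subgroup.card_dvd_of_surjective φ.rangeRestrict φ.rangeRestrict_surjective
  have hrange1 : Nat.card φ.range = 1 := Nat.eq_one_of_dvd_one (hgcd ▸ Nat.dvd_gcd hdvd1 hdvd2)
  have htriv : ∀ g : G, φ g = 1 := by
    intro g
    have : φ g ∈ φ.range := ⟨g, rfl⟩
    rwa [(Subgroup.card_eq_one).mp hrange1, Subgroup.mem_bot] at this
  intro x hx g
  have h2 : QuotientGroup.mk (MulAut.conjNormal g (⟨x, hx⟩ : commutator G)) =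
      (QuotientGroup.mk (⟨x, hx⟩ : commutator G) :
        commutator G ⧸ (commutator G ⊓ Subgroup.center G).subgroupOf (commutator G)) := by
    have h1 := congrArg (fun (e : MulAut _) => e (QuotientGroup.mk (⟨x, hx⟩ : commutator G)))
      (htriv g)
    simp [QuotientGroup.congr_mk, φ] at h1; exact h1
  have h3 := (QuotientGroup.eq).mp h2
  rw [Subgroup.mem_subgroupOf] at h3
  have h4 : (g * x * g⁻¹)⁻¹ * x ∈ commutator G ⊓ Subgroup.center G := by
    simpa [MulAut.conjNormal_apply] using h3
  have heq : ⁅x, g⁆ = x * ((g * x * g⁻¹)⁻¹ * x) * x⁻¹ := by group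
  rw [heq]
  exact hNnorm.conj_mem _ h4 x

/-- Let `G` be a finite group and `p` a prime such that
`gcd (p-1, |G|) = 1`. If `|G'| = p^2` and `|G' ∩ Z(G)| = p`, then `G` is nilpotent of
class `3`; in particular, `G ≅ P × A` where `A` is abelian and `P` is a `p`-group with
`|P'| = p^2` and `|P' ∩ Z(P)| = p`. -/
theorem nilpotent_class_three_of_card_commutator (G : Type*) [Group G] [Finite G]
    (p : ℕ) (hp : p.Prime)
    (hgcd : Nat.gcd (p - 1) (Nat.card G) = 1)
    (hG' : Nat.card ↥(commutator G) = p ^ 2)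
    (hGZ : Nat.card ↥(commutator G ⊓ Subgroup.center G) = p) :
    ((⊤ : Subgroup G).lowerCentralSeries 3 = ⊥ ∧ (⊤ : Subgroup G).lowerCentralSeries 2 ≠ ⊥) ∧
    ∃ P A : Subgroup G,
      IsPGroup p ↥P ∧
      (∀ a b : ↥A, a * b = b * a) ∧
      Nonempty (G ≃* ↥P × ↥A) ∧
      Nat.card ↥(commutator ↥P) = p ^ 2 ∧
      Nat.card ↥(commutator ↥P ⊓ Subgroup.center ↥P) = p := by
  classical
  haveI : Fact p.Prime := ⟨hp⟩
  have hkey := key_le hp hgcd hG' hGZ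
  have h2 : (⊤ : Subgroup G).lowerCentralSeries 2 ≤ commutator G ⊓ Subgroup.center G := by
    rw [show (2 : ℕ) = 1 + 1 from rfl, Subgroup.lowerCentralSeries_succ, Subgroup.commutator_def, Subgroup.closure_le]
    rintro x ⟨a, ha, g, -, rfl⟩
    exact hkey a ha g
  have h3 : (⊤ : Subgroup G).lowerCentralSeries 3 = ⊥ :=
    Subgroup.lowerCentralSeries_succ_eq_bot ⊤ (h2.trans inf_le_right)
  have h2ne : (⊤ : Subgroup G).lowerCentralSeries 2 ≠ ⊥ := by
    intro hbot
    have hb : ⁅commutator G, (⊤ : Subgroup G)⁆ = ⊥ := by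
      rw [← Subgroup.top_lowerCentralSeries_one]
      exact hbot
    have hle := Subgroup.commutator_eq_bot_iff_le_centralizer.mp hb
    rw [Subgroup.coe_top, Subgroup.centralizer_univ] at hle
    have heq : commutator G ⊓ Subgroup.center G = commutator G := inf_eq_left.mpr hle
    rw [heq, hG'] at hGZ
    nlinarith [hp.two_le]
  refine ⟨⟨h3, h2ne⟩, ?_⟩
  haveI hnil : Group.IsNilpotent G := Subgroup.nilpotent_iff_lowerCentralSeries.mpr ⟨3, h3⟩
  have hsylow : ∀ (q : ℕ) (_ : Fact q.Prime) (Q : Sylow q G), (↑Q : Subgroup G).Normal :=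
    (isNilpotent_of_finite_tfae.out 0 3).mp hnil
  -- Sylow subgroups for primes other than p are central
  have hcentralSylow : ∀ (q : ℕ) (hq : q.Prime), q ≠ p → ∀ Q : Sylow q G,
      (↑Q : Subgroup G) ≤ Subgroup.center G := by
    intro q hq hne Q
    haveI : Fact q.Prime := ⟨hq⟩
    haveI hQn : (↑Q : Subgroup G).Normal := hsylow q ⟨hq⟩ Q
    have hdisj : Disjoint (commutator G) (↑Q : Subgroup G) :=
      IsPGroup.disjoint_of_ne p q hne.symm _ _ (IsPGroup.of_card hG') Q.isPGroup'
    have h1 : ⁅(↑Q : Subgroup G), (⊤ : Subgroup G)⁆ ≤ commutator G := by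
      rw [_root_.commutator_def]
      exact Subgroup.commutator_mono le_top le_top
    have h2' : ⁅(↑Q : Subgroup G), (⊤ : Subgroup G)⁆ ≤ ↑Q := Subgroup.commutator_le_left _ _
    have hb : ⁅(↑Q : Subgroup G), (⊤ : Subgroup G)⁆ = ⊥ :=
      le_bot_iff.mp (le_trans (le_inf h1 h2') hdisj.le_bot)
    have := Subgroup.commutator_eq_bot_iff_le_centralizer.mp hb
    rwa [Subgroup.coe_top, Subgroup.centralizer_univ] at this
  obtain ⟨P₀⟩ : Nonempty (Sylow p G) := inferInstance
  haveI hPnorm : (↑P₀ : Subgroup G).Normal := hsylow p ⟨hp⟩ P₀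
  have hG'P : commutator G ≤ ↑P₀ := by
    obtain ⟨R, hR⟩ := (IsPGroup.of_card (hG' : Nat.card ↥(commutator G) = p ^ 2)).exists_le_sylow
    haveI := Sylow.unique_of_normal P₀ hPnorm
    rwa [Subsingleton.elim R P₀] at hR
  -- the complement: join of all other Sylow subgroups
  let ι := {q : (Nat.card G).primeFactors // (q : ℕ) ≠ p}
  have hqprime : ∀ q : ι, Nat.Prime (q : ℕ) := fun q => Nat.prime_of_mem_primeFactors q.1.2
  let S : ι → Subgroup G := fun q => ↑(Classical.arbitrary (Sylow (q : ℕ) G))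
  have hScentral : ∀ q : ι, S q ≤ Subgroup.center G := fun q =>
    hcentralSylow _ (hqprime q) q.2 _
  have hScard : ∀ q : ι, Nat.card (S q) = (q : ℕ) ^ (Nat.card G).factorization (q : ℕ) := by
    intro q
    haveI : Fact (Nat.Prime (q : ℕ)) := ⟨hqprime q⟩
    exact Sylow.card_eq_multiplicity _
  set A : Subgroup G := ⨆ q : ι, S q with hA
  have hAcentral : A ≤ Subgroup.center G := iSup_le hScentral
  have hAcomm : ∀ a ∈ A, ∀ g : G, g * a = a * g := fun a ha g =>
    Subgroup.mem_center_iff.mp (hAcentral ha) g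
  haveI hAnormal : A.Normal := by
    constructor
    intro n hn g
    have heq : g * n * g⁻¹ = n := by
      rw [hAcomm n hn g, mul_assoc, mul_inv_cancel, mul_one]
    rw [heq]; exact hn
  have hpw : Pairwise fun i j : ι => ∀ x y : G, x ∈ S i → y ∈ S j → Commute x y := by
    intro i j _ x y hx hy
    exact (Subgroup.mem_center_iff.mp (hScentral i hx) y).symm
  have hAdvd : Nat.card A ∣ ∏ q : ι, Nat.card (S q) := by
    have hrange := Subgroup.noncommPiCoprod_range (hcomm := hpw)
    have h1 : Nat.card A = Nat.card (Subgroup.noncommPiCoprod hpw).range := by rw [hrange]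
    rw [h1, ← Nat.card_pi]
    exact Subgroup.card_dvd_of_surjective _ (MonoidHom.rangeRestrict_surjective _)
  have hcop : Nat.Coprime p (Nat.card A) := by
    apply Nat.Coprime.coprime_dvd_right hAdvd
    apply Nat.Coprime.prod_right
    intro q _
    rw [hScard q]
    exact Nat.Coprime.pow_right _ ((Nat.coprime_primes hp (hqprime q)).mpr (Ne.symm q.2))
  have hPA : (↑P₀ : Subgroup G) ⊓ A = ⊥ := by
    apply Subgroup.card_eq_one.mp
    have d1 : Nat.card ((↑P₀ : Subgroup G) ⊓ A : Subgroup G) ∣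
        p ^ (Nat.card G).factorization p := by
      rw [← Sylow.card_eq_multiplicity P₀]
      exact Subgroup.card_dvd_of_le inf_le_left
    have d2 : Nat.card ((↑P₀ : Subgroup G) ⊓ A : Subgroup G) ∣ Nat.card A :=
      Subgroup.card_dvd_of_le inf_le_right
    exact Nat.eq_one_of_dvd_one ((hcop.pow_left _) ▸ Nat.dvd_gcd d1 d2)
  have hsup : (↑P₀ : Subgroup G) ⊔ A = ⊤ := by
    apply Subgroup.eq_top_of_card_eq
    apply Nat.dvd_antisymm (Subgroup.card_subgroup_dvd_card _)
    have hne1 : Nat.card ↥((↑P₀ : Subgroup G) ⊔ A) ≠ 0 := Nat.card_pos.ne'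
    have hne2 : Nat.card G ≠ 0 := Nat.card_pos.ne'
    rw [← Nat.factorization_le_iff_dvd hne2 hne1, Finsupp.le_def]
    intro q
    by_cases hq0 : q ∈ (Nat.card G).primeFactors
    · have hqp : q.Prime := Nat.prime_of_mem_primeFactors hq0
      haveI : Fact q.Prime := ⟨hqp⟩
      rw [← Nat.Prime.pow_dvd_iff_le_factorization hqp hne1]
      by_cases hqe : q = p
      · subst hqe
        have := Subgroup.card_dvd_of_le (le_sup_left :
          (↑P₀ : Subgroup G) ≤ (↑P₀ : Subgroup G) ⊔ A)
        rwa [Sylow.card_eq_multiplicity P₀] at this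
      · have hle : S ⟨⟨q, hq0⟩, hqe⟩ ≤ (↑P₀ : Subgroup G) ⊔ A :=
          le_trans (le_iSup S ⟨⟨q, hq0⟩, hqe⟩) le_sup_right
        have := Subgroup.card_dvd_of_le hle
        rwa [hScard ⟨⟨q, hq0⟩, hqe⟩] at this
    · have : (Nat.card G).factorization q = 0 :=
        Finsupp.notMem_support_iff.mp (by rwa [Nat.support_factorization])
      rw [this]
      exact Nat.zero_le _
  -- the isomorphism
  have hc : ∀ (x : ↥(↑P₀ : Subgroup G)) (a : ↥A),
      Commute ((↑P₀ : Subgroup G).subtype x) (A.subtype a) := fun x a =>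
    (hAcomm ↑a a.2 ↑x)
  let f : ↥(↑P₀ : Subgroup G) × ↥A →* G :=
    MonoidHom.noncommCoprod (↑P₀ : Subgroup G).subtype A.subtype hc
  have hfsurj : Function.Surjective f := by
    intro g
    have hg : g ∈ ((↑((↑P₀ : Subgroup G) ⊔ A) : Set G)) := by rw [hsup]; trivial
    rw [Subgroup.mul_normal] at hg
    obtain ⟨x, hx, a, ha, rfl⟩ := hg
    exact ⟨(⟨x, hx⟩, ⟨a, ha⟩), rfl⟩
  have hfinj : Function.Injective f := by
    rw [← MonoidHom.ker_eq_bot_iff, eq_bot_iff]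
    rintro ⟨x, a⟩ hxa
    have h1 : (↑x : G) * ↑a = 1 := hxa
    have hx : (↑x : G) ∈ (↑P₀ : Subgroup G) ⊓ A :=
      ⟨x.2, by rw [eq_inv_of_mul_eq_one_left h1]; exact A.inv_mem a.2⟩
    rw [hPA, Subgroup.mem_bot] at hx
    have ha : (↑a : G) = 1 := by rw [hx, one_mul] at h1; exact h1
    rw [Subgroup.mem_bot, Prod.ext_iff]
    exact ⟨Subtype.ext hx, Subtype.ext ha⟩
  have e : (↥(↑P₀ : Subgroup G) × ↥A) ≃* G := MulEquiv.ofBijective f ⟨hfinj, hfsurj⟩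
  -- commutator of P equals commutator of G
  have hPP : ⁅(↑P₀ : Subgroup G), (↑P₀ : Subgroup G)⁆ = commutator G := by
    apply le_antisymm
    · rw [_root_.commutator_def]
      exact Subgroup.commutator_mono le_top le_top
    · rw [_root_.commutator_def, Subgroup.commutator_le]
      intro g _ h _
      obtain ⟨⟨x, a⟩, rfl⟩ := hfsurj g
      obtain ⟨⟨y, b⟩, rfl⟩ := hfsurj h
      have hfa : f (x, a) = (↑x : G) * ↑a := rfl
      have hfb : f (y, b) = (↑y : G) * ↑b := rfl
      rw [hfa, hfb, comm_central (↑x) (↑y) (hAcomm ↑a a.2) (hAcomm ↑b b.2)]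
      exact Subgroup.commutator_mem_commutator x.2 y.2
  have hmapcomm : Subgroup.map (↑P₀ : Subgroup G).subtype (commutator ↥(↑P₀ : Subgroup G)) =
      commutator G := by
    have hstep : Subgroup.map (↑P₀ : Subgroup G).subtype (commutator ↥(↑P₀ : Subgroup G)) =
        ⁅Subgroup.map (↑P₀ : Subgroup G).subtype ⊤, Subgroup.map (↑P₀ : Subgroup G).subtype ⊤⁆ := by
      rw [_root_.commutator_def (↥(↑P₀ : Subgroup G)), Subgroup.map_commutator]
    rw [hstep, ← MonoidHom.range_eq_map, Subgroup.range_subtype, hPP]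
  have hcards : Nat.card (commutator ↥(↑P₀ : Subgroup G)) = p ^ 2 := by
    have h1 : Nat.card ↥(commutator ↥(↑P₀ : Subgroup G)) =
        Nat.card ↥(Subgroup.map (↑P₀ : Subgroup G).subtype (commutator ↥(↑P₀ : Subgroup G))) :=
      Nat.card_congr (Subgroup.equivMapOfInjective _ _ (Subgroup.subtype_injective _)).toEquiv
    have h2 := congrArg (fun (H : Subgroup G) => Nat.card ↥H) hmapcomm
    exact h1.trans (h2.trans hG')
  -- center of P
  have hcent : Subgroup.map (↑P₀ : Subgroup G).subtype (Subgroup.center ↥(↑P₀ : Subgroup G)) =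
      (↑P₀ : Subgroup G) ⊓ Subgroup.center G := by
    apply le_antisymm
    · rintro _ ⟨z, hz, rfl⟩
      refine ⟨z.2, Subgroup.mem_center_iff.mpr fun g => ?_⟩
      obtain ⟨⟨x, a⟩, rfl⟩ := hfsurj g
      have hxz : (↑x : G) * ↑z = ↑z * ↑x :=
        congrArg Subtype.val (Subgroup.mem_center_iff.mp hz x)
      have hfa : f (x, a) = (↑x : G) * ↑a := rfl
      rw [hfa]
      calc (↑x : G) * ↑a * ↑z = ↑x * (↑z * ↑a) := by rw [mul_assoc, ← hAcomm ↑a a.2 ↑z]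
      _ = (↑x * ↑z) * ↑a := by rw [mul_assoc]
      _ = (↑z * ↑x) * ↑a := by rw [hxz]
      _ = ↑z * (↑x * ↑a) := by rw [mul_assoc]
    · rintro w ⟨hwP, hwZ⟩
      exact ⟨⟨w, hwP⟩, Subgroup.mem_center_iff.mpr fun u =>
        Subtype.ext (Subgroup.mem_center_iff.mp hwZ ↑u), rfl⟩
  have hfinal : Subgroup.map (↑P₀ : Subgroup G).subtype
      (commutator ↥(↑P₀ : Subgroup G) ⊓ Subgroup.center ↥(↑P₀ : Subgroup G)) =
      commutator G ⊓ Subgroup.center G := by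
    rw [Subgroup.map_inf _ _ _ (Subgroup.subtype_injective _), hmapcomm, hcent,
      ← inf_assoc, inf_eq_left.mpr hG'P]
  have hcardZ : Nat.card
      ↥(commutator ↥(↑P₀ : Subgroup G) ⊓ Subgroup.center ↥(↑P₀ : Subgroup G)) = p := by
    have h1 : Nat.card ↥(commutator ↥(↑P₀ : Subgroup G) ⊓ Subgroup.center ↥(↑P₀ : Subgroup G)) =
        Nat.card ↥(Subgroup.map (↑P₀ : Subgroup G).subtype
          (commutator ↥(↑P₀ : Subgroup G) ⊓ Subgroup.center ↥(↑P₀ : Subgroup G))) :=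
      Nat.card_congr (Subgroup.equivMapOfInjective _ _ (Subgroup.subtype_injective _)).toEquiv
    have h2 := congrArg (fun (H : Subgroup G) => Nat.card ↥H) hfinal
    exact h1.trans (h2.trans hGZ)
  exact ⟨↑P₀, A, P₀.isPGroup', fun a b => Subtype.ext (hAcomm ↑b b.2 ↑a),
    ⟨e.symm⟩, hcards, hcardZ⟩
end

section
/- Let G be a finite group, p a prime, and suppose G' is not contained in Z(G). Assume either (i) G' is cyclic of order p^2 and gcd(p-1, |G|) = 1, or (ii) G' is isomorphic to C_p × C_p and gcd(p^2 - 1, |G|) = 1. Then |G : C_G(G')| = p, |G' ∩ Z(G)| = p, and every element x ∈ G' with x ∉ Z(G) has conjugacy class of size exactly p. -/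
open Matrix in
lemma card_mulAut_zmod_prod (p : ℕ) (hp : p.Prime) :
    Nat.card (MulAut (Multiplicative (ZMod p) × Multiplicative (ZMod p))) =
      (p ^ 2 - 1) * (p ^ 2 - p) := by
  haveI : Fact p.Prime := ⟨hp⟩
  set V := ZMod p × ZMod p
  set W := Fin 2 → ZMod p
  let e1 : MulAut (Multiplicative (ZMod p) × Multiplicative (ZMod p)) ≃
      MulAut (Multiplicative V) :=
    (MulAut.congr (MulEquiv.prodMultiplicative (G := ZMod p) (H := ZMod p)).symm).toEquiv
  let e2 : MulAut (Multiplicative V) ≃ AddAut V := MulEquiv.toAdditive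
  let e3 : AddAut V ≃ (V ≃ₗ[ZMod p] V) :=
    { toFun := fun f => f.toLinearEquiv (fun c x => ZMod.map_smul f c x)
      invFun := fun f => f.toAddEquiv
      left_inv := fun f => rfl
      right_inv := fun f => rfl }
  let f0 : W ≃ₗ[ZMod p] V := LinearEquiv.finTwoArrow (ZMod p) (ZMod p)
  let e4 : (V ≃ₗ[ZMod p] V) ≃ (W ≃ₗ[ZMod p] W) :=
    { toFun := fun g => f0 ≪≫ₗ (g ≪≫ₗ f0.symm)
      invFun := fun g => f0.symm ≪≫ₗ (g ≪≫ₗ f0)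
      left_inv := fun g => by ext v <;> simp
      right_inv := fun g => by ext v <;> simp }
  let e5 : (W ≃ₗ[ZMod p] W) ≃ (GL (Fin 2) (ZMod p)) :=
    ((LinearMap.GeneralLinearGroup.generalLinearEquiv (ZMod p) W).symm.trans
      (Units.mapEquiv
        (LinearMap.toMatrixAlgEquiv (Pi.basisFun (ZMod p) (Fin 2))).toRingEquiv.toMulEquiv)).toEquiv
  have hcard : Nat.card (MulAut (Multiplicative (ZMod p) × Multiplicative (ZMod p))) =
      Nat.card (GL (Fin 2) (ZMod p)) :=
    Nat.card_congr (e1.trans (e2.trans (e3.trans (e4.trans e5))))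
  rw [hcard, Matrix.card_GL_field, ZMod.card p, Fin.prod_univ_two]
  simp [pow_zero, pow_one]

/-- Let `G` be a finite group, `p` a prime, and suppose
`G' ⊄ Z(G)`. Assume either (i) `G'` is cyclic of order `p^2` and `gcd (p-1, |G|) = 1`,
or (ii) `G' ≅ C_p × C_p` and `gcd (p^2-1, |G|) = 1`. Then `|G : C_G(G')| = p`,
`|G' ∩ Z(G)| = p`, and every `x ∈ G' \ Z(G)` has conjugacy class of size `p`. -/
theorem index_centralizer_commutator_eq_prime (G : Type*) [Group G] [Finite G]
    (p : ℕ) (hp : p.Prime)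
    (hns : ¬ commutator G ≤ Subgroup.center G)
    (h : (IsCyclic ↥(commutator G) ∧ Nat.card ↥(commutator G) = p ^ 2 ∧
            Nat.gcd (p - 1) (Nat.card G) = 1) ∨
         (Nonempty (↥(commutator G) ≃* (Multiplicative (ZMod p) × Multiplicative (ZMod p))) ∧
            Nat.gcd (p ^ 2 - 1) (Nat.card G) = 1)) :
    (Subgroup.centralizer (commutator G : Set G)).index = p ∧
    Nat.card ↥(commutator G ⊓ Subgroup.center G) = p ∧
    ∀ x ∈ commutator G, x ∉ Subgroup.center G →
      Nat.card (MulAction.orbit (ConjAct G) x) = p := by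
  classical
  haveI : Fact p.Prime := ⟨hp⟩
  set N := commutator G with hNdef
  let φ : G →* MulAut N := MulAut.conjNormal
  -- the kernel of the conjugation action is the centralizer
  have hker : φ.ker = Subgroup.centralizer (N : Set G) := by
    ext g
    simp only [MonoidHom.mem_ker, Subgroup.mem_centralizer_iff]
    constructor
    · intro hg x hx
      have h1 : φ g ⟨x, hx⟩ = ⟨x, hx⟩ := by rw [hg]; rfl
      have h2 : g * x * g⁻¹ = x := congrArg Subtype.val h1
      exact (mul_inv_eq_iff_eq_mul.mp h2).symm
    · intro hg
      ext x
      have := hg x.1 x.2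
      show g * x.1 * g⁻¹ = x.1
      rw [← this]
      group
  -- the cardinality of the commutator subgroup is p^2
  have hcomm : Nat.card N = p ^ 2 := by
    rcases h with ⟨_, hcard, _⟩ | ⟨⟨e⟩, _⟩
    · exact hcard
    · rw [Nat.card_congr e.toEquiv, Nat.card_prod]
      have : Nat.card (Multiplicative (ZMod p)) = p := by
        rw [Nat.card_congr Multiplicative.toAdd, Nat.card_zmod]
      rw [this, sq]
  set d := Nat.card φ.range with hddef
  have hd1 : φ.ker.index = d := Subgroup.index_ker φ
  have hdG : d ∣ Nat.card G := hd1 ▸ Subgroup.index_dvd_card φ.ker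
  have hdA : d ∣ Nat.card (MulAut N) := Subgroup.card_subgroup_dvd_card φ.range
  -- d divides p
  have hdp : d ∣ p := by
    rcases h with ⟨hcyc, hcard, hgcd⟩ | ⟨⟨e⟩, hgcd⟩
    · haveI := hcyc
      rw [IsCyclic.card_mulAut, hcard, Nat.totient_prime_pow hp (by norm_num), pow_one] at hdA
      have hco : Nat.Coprime d (p - 1) :=
        Nat.Coprime.symm (Nat.Coprime.coprime_dvd_right hdG hgcd)
      exact hco.dvd_of_dvd_mul_right (mul_comm p (p - 1) ▸ hdA)
    · rw [Nat.card_congr (MulAut.congr e).toEquiv, card_mulAut_zmod_prod p hp] at hdA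
      have hps : p ^ 2 - p = (p - 1) * p := by
        rw [Nat.sub_mul, one_mul, ← pow_two]
      have hco1 : Nat.Coprime d (p ^ 2 - 1) :=
        Nat.Coprime.symm (Nat.Coprime.coprime_dvd_right hdG hgcd)
      have hsub : (p - 1) ∣ (p ^ 2 - 1) := by
        have hsq := Nat.sq_sub_sq p 1
        rw [one_pow] at hsq
        exact ⟨p + 1, by rw [hsq, mul_comm]⟩
      have hco2 : Nat.Coprime d (p - 1) := Nat.Coprime.coprime_dvd_right hsub hco1
      rw [hps, ← mul_assoc] at hdA
      exact (hco1.mul_right hco2).dvd_of_dvd_mul_left hdA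
  have hd_ne1 : d ≠ 1 := by
    intro hd
    apply hns
    have htop : Subgroup.centralizer (N : Set G) = ⊤ := by
      rw [← hker, ← Subgroup.index_eq_one, hd1, hd]
    intro x hx
    rw [Subgroup.mem_center_iff]
    intro g
    have hg : g ∈ Subgroup.centralizer (N : Set G) := htop ▸ Subgroup.mem_top g
    exact (Subgroup.mem_centralizer_iff.mp hg x hx).symm
  have hdp' : d = p := ((Nat.dvd_prime hp).mp hdp).resolve_left hd_ne1
  have hindex : (Subgroup.centralizer (N : Set G)).index = p := by
    rw [← hker, hd1, hdp']
  refine ⟨hindex, ?_, ?_⟩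
  · -- |G' ∩ Z(G)| = p
    haveI : IsPGroup p φ.range := IsPGroup.of_card (by rw [← hddef, hdp', pow_one])
    have hP : IsPGroup p φ.range := IsPGroup.of_card (by rw [← hddef, hdp', pow_one])
    have hmod := hP.card_modEq_card_fixedPoints ↥N
    -- fixed points equiv the intersection
    have heqv : MulAction.fixedPoints φ.range N ≃ ↥(N ⊓ Subgroup.center G) := by
      refine
        { toFun := fun x => ⟨(x.1 : G), x.1.2, Subgroup.mem_center_iff.mpr fun g => ?_⟩
          invFun := fun y => ⟨⟨y.1, y.2.1⟩, fun q => ?_⟩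
          left_inv := fun x => by ext; rfl
          right_inv := fun y => by ext; rfl }
      · have hq : (⟨φ g, g, rfl⟩ : φ.range) • x.1 = x.1 := x.2 ⟨φ g, g, rfl⟩
        have : φ g x.1 = x.1 := hq
        have h2 : g * (x.1 : G) * g⁻¹ = (x.1 : G) := congrArg Subtype.val this
        exact mul_inv_eq_iff_eq_mul.mp h2
      · obtain ⟨g, hg⟩ := q.2
        show q.1 • (⟨y.1, y.2.1⟩ : N) = _
        rw [← hg]
        show φ g (⟨y.1, y.2.1⟩ : N) = _
        ext
        show g * y.1 * g⁻¹ = y.1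
        have hy := (Subgroup.mem_center_iff.mp y.2.2) g
        rw [hy]
        group
    have hpd : p ∣ Nat.card ↥(N ⊓ Subgroup.center G) := by
      rw [← Nat.card_congr heqv]
      have h0 : Nat.card N ≡ 0 [MOD p] :=
        (Nat.modEq_zero_iff_dvd).mpr (hcomm ▸ dvd_pow_self p two_ne_zero)
      exact (Nat.modEq_zero_iff_dvd).mp (hmod.symm.trans h0)
    have hdvd2 : Nat.card ↥(N ⊓ Subgroup.center G) ∣ p ^ 2 :=
      hcomm ▸ Subgroup.card_dvd_of_le inf_le_left
    have hne : Nat.card ↥(N ⊓ Subgroup.center G) ≠ p ^ 2 := by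
      intro heq
      apply hns
      have : N ⊓ Subgroup.center G = N :=
        Subgroup.eq_of_le_of_card_ge inf_le_left (le_of_eq (hcomm.trans heq.symm))
      exact inf_eq_left.mp this
    obtain ⟨k, hk2, hkm⟩ := (Nat.dvd_prime_pow hp).mp hdvd2
    interval_cases k
    · rw [hkm, pow_zero] at hpd
      exact absurd (Nat.le_of_dvd one_pos hpd) (Nat.not_le.mpr hp.one_lt)
    · rw [hkm, pow_one]
    · exact absurd hkm hne
  · -- conjugacy classes
    intro x hx hxc
    have h1 : Nat.card (MulAction.orbit (ConjAct G) x) =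
        (MulAction.stabilizer (ConjAct G) x).index := by
      rw [Subgroup.index]
      exact Nat.card_congr (MulAction.orbitEquivQuotientStabilizer (ConjAct G) x)
    have h2 : (Subgroup.centralizer {x}).index =
        (MulAction.stabilizer (ConjAct G) x).index := by
      rw [Subgroup.centralizer_eq_comap_stabilizer]
      exact Subgroup.index_comap_of_surjective (f := ConjAct.toConjAct.toMonoidHom) _
        ConjAct.toConjAct.surjective
    have h3 : (Subgroup.centralizer {x}).index ∣ p := by
      rw [← hindex]
      exact Subgroup.index_dvd_of_le
        (Subgroup.centralizer_le (Set.singleton_subset_iff.mpr hx))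
    have h4 : (Subgroup.centralizer {x}).index ≠ 1 := by
      intro h1'
      apply hxc
      have htop : Subgroup.centralizer {x} = ⊤ := Subgroup.index_eq_one.mp h1'
      rw [Subgroup.mem_center_iff]
      intro g
      have hg : g ∈ Subgroup.centralizer {x} := htop ▸ Subgroup.mem_top g
      exact (Subgroup.mem_centralizer_iff.mp hg x rfl).symm
    rw [h1, ← h2]
    exact ((Nat.dvd_prime hp).mp h3).resolve_left h4
end

section
/- Let p be a prime and G a finite p-group with |G' ∩ Z(G)| = p and |G'| = p^2. Then Z(G)* ∩ Z(C_G(G')) = G'Z(G), where G'Z(G) is the subgroup generated by G' and Z(G). -/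
open scoped commutatorElement

/-- For a normal subgroup `H` of `G`, `starSubgroup H` is the subgroup
`H* = {x ∈ G : [g,x] ∈ H for all g ∈ G}`. -/
def starSubgroup {G : Type*} [Group G] (H : Subgroup G) [hH : H.Normal] : Subgroup G where
  carrier := {x : G | ∀ g : G, ⁅g, x⁆ ∈ H}
  one_mem' := by
    intro g
    simpa [commutatorElement_def] using H.one_mem
  mul_mem' := by
    intro x y hx hy g
    have h : ⁅g, x * y⁆ = ⁅g, x⁆ * (x * ⁅g, y⁆ * x⁻¹) := by
      simp only [commutatorElement_def]; group
    show ⁅g, x * y⁆ ∈ H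
    rw [h]
    exact H.mul_mem (hx g) (hH.conj_mem _ (hy g) x)
  inv_mem' := by
    intro x hx g
    have h : ⁅g, x⁻¹⁆ = x⁻¹ * ⁅g, x⁆⁻¹ * (x⁻¹)⁻¹ := by
      simp only [commutatorElement_def]; group
    show ⁅g, x⁻¹⁆ ∈ H
    rw [h]
    exact hH.conj_mem _ (H.inv_mem (hx g)) x⁻¹

section helpers

private lemma fermat_pow_pow {p : ℕ} (hp : p.Prime) (e : ℕ) (m : ℤ) :
    (p : ℤ) ∣ m ^ p ^ e - m := by
  haveI : Fact p.Prime := ⟨hp⟩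
  have key : ((m : ZMod p)) ^ p ^ e = (m : ZMod p) := by
    induction e with
    | zero => simp
    | succ e ih => rw [pow_succ, pow_mul, ih, ZMod.pow_card]
  have h0 : ((m ^ p ^ e - m : ℤ) : ZMod p) = 0 := by push_cast; rw [key]; ring
  exact (ZMod.intCast_zmod_eq_zero_iff_dvd _ _).mp h0

private lemma mem_sup_decomp {G : Type*} [Group G] (N K : Subgroup G) [N.Normal] {u : G}
    (h : u ∈ N ⊔ K) : ∃ n ∈ N, ∃ k ∈ K, n * k = u := by
  have h2 : u ∈ (↑(N ⊔ K) : Set G) := h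
  rw [Subgroup.normal_mul, Set.mem_mul] at h2
  exact h2

private lemma conj_zpow_central {G : Type*} [Group G] {t y a : G}
    (ha : ∀ g : G, a * g = g * a) (h : t * y * t⁻¹ = a * y) (s : ℤ) :
    t ^ s * y * (t ^ s)⁻¹ = a ^ s * y := by
  have hc : ∀ (n : ℤ) (g : G), a ^ n * g = g * a ^ n := fun n g =>
    ((show Commute a g from ha g).zpow_left n).eq
  have hinv : t⁻¹ * y * t = a⁻¹ * y := by
    have h2 : y = a⁻¹ * (t * y * t⁻¹) := by rw [h]; group
    calc t⁻¹ * y * t = t⁻¹ * (a⁻¹ * (t * y * t⁻¹)) * t := by rw [← h2]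
      _ = t⁻¹ * a⁻¹ * t * y * (t⁻¹ * t) := by group
      _ = t⁻¹ * a⁻¹ * t * y := by group
      _ = a⁻¹ * y := by rw [show t⁻¹ * a⁻¹ = a⁻¹ * t⁻¹ from
            ((show Commute a t⁻¹ from ha t⁻¹).inv_left.eq).symm]; group
  induction s using Int.induction_on with
  | zero => simp
  | succ n ih =>
      have h1 : t ^ ((n : ℤ) + 1) * y * (t ^ ((n : ℤ) + 1))⁻¹
          = t * (t ^ (n : ℤ) * y * (t ^ (n : ℤ))⁻¹) * t⁻¹ := by
        rw [zpow_add_one]; group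
      rw [h1, ih]
      calc t * (a ^ (n : ℤ) * y) * t⁻¹ = a ^ (n : ℤ) * (t * y * t⁻¹) := by
            rw [← mul_assoc, ← hc (n : ℤ) t]; group
        _ = a ^ ((n : ℤ) + 1) * y := by rw [h, ← mul_assoc, ← zpow_add_one]
  | pred n ih =>
      have h1 : t ^ (-(n : ℤ) - 1) * y * (t ^ (-(n : ℤ) - 1))⁻¹
          = t⁻¹ * (t ^ (-(n : ℤ)) * y * (t ^ (-(n : ℤ)))⁻¹) * t := by
        rw [zpow_sub_one]; group
      rw [h1, ih]
      calc t⁻¹ * (a ^ (-(n : ℤ)) * y) * t = a ^ (-(n : ℤ)) * (t⁻¹ * y * t) := by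
            rw [← mul_assoc, ← hc (-(n : ℤ)) t⁻¹]; group
        _ = a ^ (-(n : ℤ) - 1) * y := by rw [hinv, ← mul_assoc, ← zpow_sub_one]

end helpers

/-- Let `p` be a prime and `G` a finite `p`-group with
`|G' ∩ Z(G)| = p` and `|G'| = p^2`. Then `Z(G)* ∩ Z(C_G(G')) = G'Z(G)`. -/
theorem starSubgroup_center_inf_center_centralizer (G : Type*) [Group G] [Finite G]
    (p : ℕ) (hp : p.Prime) (hpG : IsPGroup p G)
    (hGZ : Nat.card ↥(commutator G ⊓ Subgroup.center G) = p)
    (hG' : Nat.card ↥(commutator G) = p ^ 2) :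
    starSubgroup (Subgroup.center G) ⊓
        (Subgroup.center ↥(Subgroup.centralizer (commutator G : Set G))).map
          (Subgroup.centralizer (commutator G : Set G)).subtype =
      commutator G ⊔ Subgroup.center G := by
  classical
  haveI : Fact p.Prime := ⟨hp⟩
  set N : Subgroup G := commutator G ⊓ Subgroup.center G with hN
  haveI hNnormal : N.Normal := by
    constructor
    intro n hn g
    obtain ⟨h1, h2⟩ := Subgroup.mem_inf.mp hn
    exact Subgroup.mem_inf.mpr ⟨Subgroup.Normal.conj_mem inferInstance n h1 g,
      Subgroup.Normal.conj_mem inferInstance n h2 g⟩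
  have hNle1 : N ≤ commutator G := inf_le_left
  have hNle2 : N ≤ Subgroup.center G := inf_le_right
  have hNcentral : ∀ n ∈ N, ∀ g : G, n * g = g * n := fun n hn g =>
    (Subgroup.mem_center_iff.mp (hNle2 hn) g).symm
  -- a noncentral element of the commutator subgroup
  have hy : ∃ y₀, y₀ ∈ commutator G ∧ y₀ ∉ Subgroup.center G := by
    by_contra hcon
    push_neg at hcon
    have hle : commutator G ≤ Subgroup.center G := hcon
    have : N = commutator G := by rw [hN, inf_eq_left.mpr hle]
    rw [this, hG'] at hGZ
    have := hp.one_lt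
    nlinarith
  obtain ⟨y₀, hy₀mem, hy₀Z⟩ := hy
  have hy₀N : y₀ ∉ N := fun h => hy₀Z (hNle2 h)
  -- dichotomy
  have hdich : ∀ u ∈ commutator G, u ∈ N ∨ N ⊔ Subgroup.zpowers u = commutator G := by
    intro u hu
    have hle : N ⊔ Subgroup.zpowers u ≤ commutator G :=
      sup_le hNle1 ((Subgroup.zpowers_le).mpr hu)
    have hdvd : Nat.card ↥(N ⊔ Subgroup.zpowers u) ∣ p ^ 2 := hG' ▸ Subgroup.card_dvd_of_le hle
    obtain ⟨i, hi2, hcard⟩ := (Nat.dvd_prime_pow hp).mp hdvd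
    rcases Nat.lt_or_ge i 2 with hi | hi
    · left
      have hle2 : Nat.card ↥(N ⊔ Subgroup.zpowers u) ≤ p := by
        rw [hcard]
        calc p ^ i ≤ p ^ 1 := Nat.pow_le_pow_right hp.one_lt.le (by omega)
          _ = p := pow_one p
      have heq : N = N ⊔ Subgroup.zpowers u :=
        Subgroup.eq_of_le_of_card_ge le_sup_left (hGZ ▸ hle2)
      have : u ∈ N ⊔ Subgroup.zpowers u := (le_sup_right : Subgroup.zpowers u ≤ _) (Subgroup.mem_zpowers u)
      rwa [← heq] at this
    · right
      have hi2' : i = 2 := by omega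
      refine Subgroup.eq_of_le_of_card_ge hle ?_
      rw [hG', hcard, hi2']
  have hE : N ⊔ Subgroup.zpowers y₀ = commutator G := (hdich y₀ hy₀mem).resolve_left hy₀N
  -- decomposition of commutator elements
  have hdec : ∀ u ∈ commutator G, ∃ ν ∈ N, ∃ k : ℤ, ν * y₀ ^ k = u := by
    intro u hu
    rw [← hE] at hu
    obtain ⟨n, hn, w, hw, hnw⟩ := mem_sup_decomp _ _ hu
    obtain ⟨k, hk⟩ := Subgroup.mem_zpowers_iff.mp hw
    exact ⟨n, hn, k, by rw [hk, hnw]⟩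
  have hy₀sq : y₀ ^ ((p : ℤ) ^ 2) = 1 := by
    have h1 : orderOf y₀ ∣ p ^ 2 := hG' ▸ Subgroup.orderOf_dvd_natCard _ hy₀mem
    have h2 : y₀ ^ (p ^ 2 : ℕ) = 1 := orderOf_dvd_iff_pow_eq_one.mp h1
    have : ((p : ℤ) ^ 2) = ((p ^ 2 : ℕ) : ℤ) := by push_cast; ring
    rw [this, zpow_natCast, h2]
  have hnotdvd : ∀ j : ℤ, y₀ ^ j ∈ N → ¬ ((p : ℤ) ∣ j) → False := by
    intro j hj hnd
    have hpint : Prime (p : ℤ) := Nat.prime_iff_prime_int.mp hp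
    have hcop : IsCoprime ((p : ℤ) ^ 2) j := ((hpint.coprime_iff_not_dvd).mpr hnd).pow_left
    obtain ⟨a, b, hab⟩ := hcop.symm
    have : y₀ = (y₀ ^ j) ^ a * (y₀ ^ ((p : ℤ) ^ 2)) ^ b := by
      rw [← zpow_mul, ← zpow_mul, ← zpow_add, show j * a + (p : ℤ) ^ 2 * b = 1 by linarith, zpow_one]
    rw [hy₀sq, one_zpow, mul_one] at this
    exact hy₀N (this ▸ N.zpow_mem hj a)
  have hy₀p : y₀ ^ (p : ℤ) ∈ N := by
    have hmem : y₀ ^ (p : ℤ) ∈ commutator G := (commutator G).zpow_mem hy₀mem _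
    rcases hdich _ hmem with h | h
    · exact h
    · exfalso
      have hy0 : y₀ ∈ N ⊔ Subgroup.zpowers (y₀ ^ (p : ℤ)) := h.symm ▸ hy₀mem
      obtain ⟨n, hn, w, hw, hnw⟩ := mem_sup_decomp _ _ hy0
      obtain ⟨c, hc⟩ := Subgroup.mem_zpowers_iff.mp hw
      have hy' : y₀ = n * y₀ ^ ((p : ℤ) * c) := by rw [zpow_mul, hc, hnw]
      have hyeq : y₀ ^ (1 - (p : ℤ) * c) = n := by
        rw [zpow_sub, zpow_one]
        exact mul_inv_eq_iff_eq_mul.mpr hy'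
      refine hnotdvd _ (by rw [hyeq]; exact hn) ?_
      intro hd
      have : (p : ℤ) ∣ 1 := by
        have h2 : (p : ℤ) ∣ (p : ℤ) * c := Dvd.intro c rfl
        have := dvd_add hd h2
        simpa using this
      have : p ∣ 1 := by exact_mod_cast this
      exact hp.one_lt.ne' (Nat.dvd_one.mp this)
  have hzpowmemN : ∀ j : ℤ, (p : ℤ) ∣ j → y₀ ^ j ∈ N := by
    intro j hj
    obtain ⟨c, rfl⟩ := hj
    rw [zpow_mul]
    exact N.zpow_mem hy₀p c
  -- the key lemma : commutators with y₀ are in N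
  have hL1y : ∀ g : G, ⁅g, y₀⁆ ∈ N := by
    intro g
    have hmem : ⁅g, y₀⁆ ∈ commutator G := by
      rw [commutator_def]
      exact Subgroup.commutator_mem_commutator (Subgroup.mem_top _) (Subgroup.mem_top _)
    obtain ⟨ν, hν, k, hk⟩ := hdec _ hmem
    have hconj : g * y₀ * g⁻¹ = ν * y₀ ^ (k + 1) := by
      have h1 : g * y₀ * g⁻¹ * y₀⁻¹ = ν * y₀ ^ k := by
        rw [← commutatorElement_def, ← hk]
      calc g * y₀ * g⁻¹ = g * y₀ * g⁻¹ * y₀⁻¹ * y₀ := by group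
        _ = ν * y₀ ^ k * y₀ := by rw [h1]
        _ = ν * y₀ ^ (k + 1) := by rw [mul_assoc, ← zpow_add_one]
    set m : ℤ := k + 1 with hm
    have key : ∀ s : ℕ, ∃ μ ∈ N, g ^ s * y₀ * (g ^ s)⁻¹ = μ * y₀ ^ (m ^ s) := by
      intro s
      induction s with
      | zero => exact ⟨1, N.one_mem, by simp⟩
      | succ s ih =>
          obtain ⟨μ, hμ, hμe⟩ := ih
          refine ⟨μ * ν ^ (m ^ s), N.mul_mem hμ (N.zpow_mem hν _), ?_⟩
          have e1 : g ^ (s + 1) * y₀ * (g ^ (s + 1))⁻¹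
              = g * (g ^ s * y₀ * (g ^ s)⁻¹) * g⁻¹ := by
            rw [pow_succ]; group
          rw [e1, hμe]
          have e2 : g * (μ * y₀ ^ (m ^ s)) * g⁻¹ = μ * (g * y₀ ^ (m ^ s) * g⁻¹) := by
            rw [← mul_assoc, ← mul_assoc, ← hNcentral μ hμ g]; group
          rw [e2]
          have e3 : g * y₀ ^ (m ^ s) * g⁻¹ = (g * y₀ * g⁻¹) ^ (m ^ s) := by
            rw [show g * y₀ * g⁻¹ = (MulAut.conj g) y₀ from rfl, ← map_zpow]
            rfl
          rw [e3, hconj]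
          have hcom : Commute ν (y₀ ^ m) := hNcentral ν hν (y₀ ^ m)
          rw [hcom.mul_zpow, ← zpow_mul,
            show m * m ^ s = m ^ (s + 1) by rw [pow_succ]; ring]
          exact (mul_assoc _ _ _).symm
    obtain ⟨e, he⟩ := hpG g
    obtain ⟨μ, hμ, hμe⟩ := key (p ^ e)
    rw [he] at hμe
    simp only [one_mul, inv_one, mul_one] at hμe
    have hμy : y₀ ^ (1 - m ^ (p ^ e)) = μ := by
      rw [zpow_sub, zpow_one]
      exact mul_inv_eq_iff_eq_mul.mpr hμe
    have hdvd1 : (p : ℤ) ∣ 1 - m ^ (p ^ e) := by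
      by_contra hnd
      exact hnotdvd _ (by rw [hμy]; exact hμ) hnd
    have hdvdk : (p : ℤ) ∣ k := by
      have h2 : (p : ℤ) ∣ (1 - m ^ (p ^ e)) + (m ^ (p ^ e) - m) :=
        dvd_add hdvd1 (fermat_pow_pow hp e m)
      have h3 : (1 - m ^ (p ^ e)) + (m ^ (p ^ e) - m) = -k := by rw [hm]; ring
      rw [h3] at h2
      exact dvd_neg.mp h2
    rw [← hk]
    exact N.mul_mem hν (hzpowmemN k hdvdk)
  have hL1 : ∀ g u : G, u ∈ commutator G → ⁅g, u⁆ ∈ N := by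
    intro g u hu
    obtain ⟨ν, hν, l, hl⟩ := hdec u hu
    have hw := hL1y g
    have hwc : ∀ x : G, ⁅g, y₀⁆ * x = x * ⁅g, y₀⁆ := hNcentral _ hw
    have hconjy : g * y₀ * g⁻¹ = ⁅g, y₀⁆ * y₀ := by rw [commutatorElement_def]; group
    have e2 : g * y₀ ^ l * g⁻¹ = ⁅g, y₀⁆ ^ l * y₀ ^ l := by
      have e3 : g * y₀ ^ l * g⁻¹ = (g * y₀ * g⁻¹) ^ l := by
        rw [show g * y₀ * g⁻¹ = (MulAut.conj g) y₀ from rfl, ← map_zpow]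
        rfl
      rw [e3, hconjy, (show Commute ⁅g, y₀⁆ y₀ from hwc y₀).mul_zpow]
    have hcal : ⁅g, u⁆ = ⁅g, y₀⁆ ^ l := by
      rw [← hl, commutatorElement_def]
      calc g * (ν * y₀ ^ l) * g⁻¹ * (ν * y₀ ^ l)⁻¹
          = ν * (g * y₀ ^ l * g⁻¹) * ((y₀ ^ l)⁻¹ * ν⁻¹) := by
            rw [show g * (ν * y₀ ^ l) = ν * (g * y₀ ^ l) by
              rw [← mul_assoc, ← hNcentral ν hν g, mul_assoc]]
            group
        _ = ν * (⁅g, y₀⁆ ^ l * y₀ ^ l) * ((y₀ ^ l)⁻¹ * ν⁻¹) := by rw [e2]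
        _ = ν * ⁅g, y₀⁆ ^ l * ν⁻¹ := by group
        _ = ⁅g, y₀⁆ ^ l := by rw [hNcentral ν hν (⁅g, y₀⁆ ^ l)]; group
    rw [hcal]
    exact N.zpow_mem hw l
  have hCmem : ∀ c : G, c ∈ Subgroup.centralizer (commutator G : Set G) ↔ c * y₀ = y₀ * c := by
    intro c
    constructor
    · intro h
      exact (Subgroup.mem_centralizer_iff.mp h y₀ hy₀mem).symm
    · intro hcy
      rw [Subgroup.mem_centralizer_iff]
      intro u hu
      obtain ⟨ν, hν, l, hl⟩ := hdec u hu
      have h1 : Commute c (y₀ ^ l) := (show Commute c y₀ from hcy).zpow_right l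
      rw [← hl]
      calc ν * y₀ ^ l * c = ν * (c * y₀ ^ l) := by rw [mul_assoc, ← h1.eq]
        _ = c * (ν * y₀ ^ l) := by rw [← mul_assoc, hNcentral ν hν c, mul_assoc]
  have hG'C : ∀ u ∈ commutator G, u ∈ Subgroup.centralizer (commutator G : Set G) := by
    intro u hu
    obtain ⟨ν, hν, l, hl⟩ := hdec u hu
    rw [hCmem, ← hl]
    calc ν * y₀ ^ l * y₀ = ν * (y₀ * y₀ ^ l) := by
          rw [mul_assoc, ← zpow_add_one, add_comm, zpow_add, zpow_one]
      _ = y₀ * (ν * y₀ ^ l) := by rw [← mul_assoc, hNcentral ν hν y₀, mul_assoc]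
  refine le_antisymm ?_ (sup_le ?_ ?_)
  · intro x hx
    obtain ⟨hx1, hx2⟩ := Subgroup.mem_inf.mp hx
    obtain ⟨x', hx'c, rfl⟩ := Subgroup.mem_map.mp hx2
    have hx1' : ∀ g : G, ⁅g, (x' : G)⁆ ∈ Subgroup.center G := hx1
    have hxc : ∀ c : G, c ∈ Subgroup.centralizer (commutator G : Set G) →
        c * (x' : G) = (x' : G) * c := by
      intro c hc
      exact congrArg Subtype.val (Subgroup.mem_center_iff.mp hx'c ⟨c, hc⟩)
    show (x' : G) ∈ commutator G ⊔ Subgroup.center G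
    by_cases hxZ : (x' : G) ∈ Subgroup.center G
    · exact (le_sup_right : Subgroup.center G ≤ _) hxZ
    · have hex : ∃ t : G, ¬ (t * (x' : G) = (x' : G) * t) := by
        by_contra hcon
        push_neg at hcon
        exact hxZ (Subgroup.mem_center_iff.mpr hcon)
      obtain ⟨t, ht⟩ := hex
      have hbN : ⁅t, (x' : G)⁆ ∈ N := Subgroup.mem_inf.mpr
        ⟨Subgroup.commutator_mem_commutator (Subgroup.mem_top _) (Subgroup.mem_top _),
         hx1' t⟩
      have hbne : ⁅t, (x' : G)⁆ ≠ 1 := fun h => ht (commutatorElement_eq_one_iff_mul_comm.mp h)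
      have htC : t ∉ Subgroup.centralizer (commutator G : Set G) := fun h => ht (hxc t h)
      have haN : ⁅t, y₀⁆ ∈ N := hL1 t y₀ hy₀mem
      have hane : ⁅t, y₀⁆ ≠ 1 := by
        intro h
        exact htC ((hCmem t).mpr (commutatorElement_eq_one_iff_mul_comm.mp h))
      have hord : orderOf ⁅t, y₀⁆ = p := by
        have h1 : orderOf ⁅t, y₀⁆ ∣ p := hGZ ▸ Subgroup.orderOf_dvd_natCard N haN
        rcases hp.eq_one_or_self_of_dvd _ h1 with h | h
        · exact absurd (orderOf_eq_one_iff.mp h) hane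
        · exact h
      have hNz : Subgroup.zpowers ⁅t, y₀⁆ = N := by
        refine Subgroup.eq_of_le_of_card_ge (Subgroup.zpowers_le.mpr haN) ?_
        rw [Nat.card_zpowers, hord, hGZ]
      have hN_as : ∀ n ∈ N, ∃ j : ℤ, ⁅t, y₀⁆ ^ j = n := by
        intro n hn
        rw [← hNz] at hn
        exact Subgroup.mem_zpowers_iff.mp hn
      have hac : ∀ g : G, ⁅t, y₀⁆ * g = g * ⁅t, y₀⁆ := hNcentral _ haN
      have hbinv : ∀ g : G, ⁅t, (x' : G)⁆⁻¹ * g = g * ⁅t, (x' : G)⁆⁻¹ :=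
        hNcentral _ (N.inv_mem hbN)
      have hta : t * y₀ * t⁻¹ = ⁅t, y₀⁆ * y₀ := by rw [commutatorElement_def]; group
      have htx : t * (x' : G) * t⁻¹ = ⁅t, (x' : G)⁆ * (x' : G) := by
        rw [commutatorElement_def]; group
      obtain ⟨j, hj⟩ := hN_as ⁅t, (x' : G)⁆⁻¹ (N.inv_mem hbN)
      have hty : t * y₀ ^ j * t⁻¹ = ⁅t, y₀⁆ ^ j * y₀ ^ j := by
        have e3 : t * y₀ ^ j * t⁻¹ = (t * y₀ * t⁻¹) ^ j := by
          rw [show t * y₀ * t⁻¹ = (MulAut.conj t) y₀ from rfl, ← map_zpow]; rfl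
        rw [e3, hta, (show Commute ⁅t, y₀⁆ y₀ from hac y₀).mul_zpow]
      have hwt : t * ((x' : G) * y₀ ^ j) * t⁻¹ = (x' : G) * y₀ ^ j := by
        calc t * ((x' : G) * y₀ ^ j) * t⁻¹
            = (t * (x' : G) * t⁻¹) * (t * y₀ ^ j * t⁻¹) := by group
          _ = (⁅t, (x' : G)⁆ * (x' : G)) * (⁅t, (x' : G)⁆⁻¹ * y₀ ^ j) := by rw [htx, hty, hj]
          _ = ⁅t, (x' : G)⁆ * ((x' : G) * ⁅t, (x' : G)⁆⁻¹) * y₀ ^ j := by group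
          _ = ⁅t, (x' : G)⁆ * (⁅t, (x' : G)⁆⁻¹ * (x' : G)) * y₀ ^ j := by rw [hbinv (x' : G)]
          _ = (x' : G) * y₀ ^ j := by group
      have hcomm_tw : t * ((x' : G) * y₀ ^ j) = ((x' : G) * y₀ ^ j) * t := by
        calc t * ((x' : G) * y₀ ^ j)
            = (t * ((x' : G) * y₀ ^ j) * t⁻¹) * t := by group
          _ = ((x' : G) * y₀ ^ j) * t := by rw [hwt]
      have hwC : ∀ c ∈ Subgroup.centralizer (commutator G : Set G),
          c * ((x' : G) * y₀ ^ j) = ((x' : G) * y₀ ^ j) * c := by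
        intro c hc
        have h1 : c * (x' : G) = (x' : G) * c := hxc c hc
        have h2 : Commute c (y₀ ^ j) := (show Commute c y₀ from (hCmem c).mp hc).zpow_right j
        calc c * ((x' : G) * y₀ ^ j) = (c * (x' : G)) * y₀ ^ j := by group
          _ = (x' : G) * (c * y₀ ^ j) := by rw [h1]; group
          _ = (x' : G) * (y₀ ^ j * c) := by rw [h2.eq]
          _ = ((x' : G) * y₀ ^ j) * c := by group
      have hGdec : ∀ g : G, ∃ c ∈ Subgroup.centralizer (commutator G : Set G),
          ∃ i : ℤ, g = c * t ^ i := by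
        intro g
        obtain ⟨i, hi⟩ := hN_as ⁅g, y₀⁆ (hL1 g y₀ hy₀mem)
        refine ⟨g * t ^ (-i), ?_, i, by group⟩
        rw [hCmem]
        have hcz := conj_zpow_central hac hta (-i)
        have hconj : (g * t ^ (-i)) * y₀ * (g * t ^ (-i))⁻¹ = y₀ := by
          calc (g * t ^ (-i)) * y₀ * (g * t ^ (-i))⁻¹
              = g * (t ^ (-i) * y₀ * (t ^ (-i))⁻¹) * g⁻¹ := by group
            _ = g * (⁅t, y₀⁆ ^ (-i) * y₀) * g⁻¹ := by rw [hcz]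
            _ = ⁅t, y₀⁆ ^ (-i) * (g * y₀ * g⁻¹) := by
                rw [← mul_assoc, ← hNcentral _ (N.zpow_mem haN (-i)) g]; group
            _ = ⁅t, y₀⁆ ^ (-i) * (⁅g, y₀⁆ * y₀) := by
                rw [show g * y₀ * g⁻¹ = ⁅g, y₀⁆ * y₀ by rw [commutatorElement_def]; group]
            _ = ⁅t, y₀⁆ ^ (-i) * (⁅t, y₀⁆ ^ i * y₀) := by rw [hi]
            _ = y₀ := by rw [← mul_assoc, ← zpow_add]; simp
        calc (g * t ^ (-i)) * y₀
            = ((g * t ^ (-i)) * y₀ * (g * t ^ (-i))⁻¹) * (g * t ^ (-i)) := by group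
          _ = y₀ * (g * t ^ (-i)) := by rw [hconj]
      have hwZ : (x' : G) * y₀ ^ j ∈ Subgroup.center G := by
        rw [Subgroup.mem_center_iff]
        intro g
        obtain ⟨c, hc, i, rfl⟩ := hGdec g
        have h1 : c * ((x' : G) * y₀ ^ j) = ((x' : G) * y₀ ^ j) * c := hwC c hc
        have h2 : t ^ i * ((x' : G) * y₀ ^ j) = ((x' : G) * y₀ ^ j) * t ^ i :=
          ((show Commute t ((x' : G) * y₀ ^ j) from hcomm_tw).zpow_left i).eq
        calc (c * t ^ i) * ((x' : G) * y₀ ^ j)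
            = c * (t ^ i * ((x' : G) * y₀ ^ j)) := by group
          _ = c * (((x' : G) * y₀ ^ j) * t ^ i) := by rw [h2]
          _ = (c * ((x' : G) * y₀ ^ j)) * t ^ i := by group
          _ = (((x' : G) * y₀ ^ j) * c) * t ^ i := by rw [h1]
          _ = ((x' : G) * y₀ ^ j) * (c * t ^ i) := by group
      have hfin : (x' : G) = ((x' : G) * y₀ ^ j) * (y₀ ^ j)⁻¹ := by group
      rw [hfin]
      exact mul_mem ((le_sup_right : Subgroup.center G ≤ _) hwZ)
        (inv_mem ((le_sup_left : commutator G ≤ _) ((commutator G).zpow_mem hy₀mem j)))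
  · intro u hu
    rw [Subgroup.mem_inf]
    constructor
    · show ∀ g : G, ⁅g, u⁆ ∈ Subgroup.center G
      exact fun g => hNle2 (hL1 g u hu)
    · refine Subgroup.mem_map.mpr ⟨⟨u, hG'C u hu⟩, ?_, rfl⟩
      rw [Subgroup.mem_center_iff]
      rintro ⟨c, hc⟩
      apply Subtype.ext
      show c * u = u * c
      exact (Subgroup.mem_centralizer_iff.mp hc u hu).symm
  · intro z hz
    rw [Subgroup.mem_inf]
    have hzc : ∀ g : G, g * z = z * g := Subgroup.mem_center_iff.mp hz
    constructor
    · show ∀ g : G, ⁅g, z⁆ ∈ Subgroup.center G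
      intro g
      rw [commutatorElement_eq_one_iff_mul_comm.mpr (hzc g)]
      exact Subgroup.one_mem _
    · have hzC : z ∈ Subgroup.centralizer (commutator G : Set G) :=
        Subgroup.mem_centralizer_iff.mpr fun h _ => hzc h
      refine Subgroup.mem_map.mpr ⟨⟨z, hzC⟩, ?_, rfl⟩
      rw [Subgroup.mem_center_iff]
      rintro ⟨c, hc⟩
      apply Subtype.ext
      show c * z = z * c
      exact hzc c
end
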